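/- arXiv:2007.15141 — 8 statements merged into one kernel-verified Lean document; each statement's English description precedes it below -/
import Mathlib

section
/- The set of eight edges of Q_4 given by {(v,0,0,0), (0,v,1,0), (0,0,v,1), (0,1,0,v), (v,1,1,1), (1,v,0,1), (1,1,v,0), (1,0,1,v)} is a matching, and every 2-dimensional subcube of Q_4 contains exactly one of these edges. (Here (v,0,0,0) denotes the edge between (0,0,0,0) and (1,0,0,0), etc.) -/
def QAdj {n : ℕ} (x y : Fin n → Bool) : Prop :=
  (Finset.univ.filter (fun i => x i ≠ y i)).card = 1

def QEdge (n : ℕ) (e : Set (Fin n → Bool)) : Prop :=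
  ∃ x y, QAdj x y ∧ e = {x, y}

def IsSubcube (n k : ℕ) (S : Set (Fin n → Bool)) : Prop :=
  ∃ (F : Finset (Fin n)) (b : Fin n → Bool),
    F.card = n - k ∧ S = {x | ∀ i ∈ F, x i = b i}

def IsMatching (n : ℕ) (M : Set (Set (Fin n → Bool))) : Prop :=
  (∀ e ∈ M, QEdge n e) ∧ ∀ e ∈ M, ∀ f ∈ M, e ≠ f → e ∩ f = ∅

def Blocks (n k : ℕ) (M : Set (Set (Fin n → Bool))) : Prop :=
  ∀ S, IsSubcube n k S → ∃ e ∈ M, e ⊆ S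

def parity {n : ℕ} (x : Fin n → Bool) : ℕ :=
  (Finset.univ.filter (fun i => x i = true)).card % 2

def PS42 : Set (Set (Fin 4 → Bool)) :=
  { {![false,false,false,false], ![true,false,false,false]},
    {![false,false,true,false], ![false,true,true,false]},
    {![false,false,false,true], ![false,false,true,true]},
    {![false,true,false,false], ![false,true,false,true]},
    {![false,true,true,true], ![true,true,true,true]},
    {![true,false,false,true], ![true,true,false,true]},
    {![true,true,false,false], ![true,true,true,false]},
    {![true,false,true,false], ![true,false,true,true]} }

section EdgeFamily

variable {n : ℕ} {ι : Type*} (p : ι → (Fin n → Bool) × (Fin n → Bool))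

def edgeRange : Set (Set (Fin n → Bool)) :=
  Set.range fun j => {(p j).1, (p j).2}

theorem isMatching_edgeRange (hadj : ∀ j, QAdj (p j).1 (p j).2)
    (hdisj : ∀ j k, j ≠ k →
      Disjoint ({(p j).1, (p j).2} : Finset (Fin n → Bool)) {(p k).1, (p k).2}) :
    IsMatching n (edgeRange p) := by
  refine ⟨?_, ?_⟩
  · rintro _ ⟨j, rfl⟩
    exact ⟨_, _, hadj j, rfl⟩
  · rintro _ ⟨j, rfl⟩ _ ⟨k, rfl⟩ hne
    have hjk : j ≠ k := by rintro rfl; exact hne rfl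
    rw [← Set.disjoint_iff_inter_eq_empty]
    simpa only [← Finset.coe_pair, Finset.disjoint_coe] using hdisj j k hjk

theorem pair_subset_setOf_forall_eq_iff {x y b : Fin n → Bool} {F : Finset (Fin n)} :
    ({x, y} : Set (Fin n → Bool)) ⊆ {z | ∀ i ∈ F, z i = b i} ↔
      ∀ i ∈ F, x i = b i ∧ y i = b i := by
  simp only [Set.insert_subset_iff, Set.singleton_subset_iff, Set.mem_ofPred_eq]
  exact forall₂_and.symm

-- `∃!` is spelled out in `h` because only this form has a `Decidable` instance over a fintype.
theorem existsUnique_mem_edgeRange_subset {k : ℕ}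
    (h : ∀ F : Finset (Fin n), F.card = n - k → ∀ b : Fin n → Bool,
      ∃ j, (∀ i ∈ F, (p j).1 i = b i ∧ (p j).2 i = b i) ∧
        ∀ j', (∀ i ∈ F, (p j').1 i = b i ∧ (p j').2 i = b i) → j' = j)
    (S : Set (Fin n → Bool)) (hS : IsSubcube n k S) :
    ∃! e, e ∈ edgeRange p ∧ e ⊆ S := by
  obtain ⟨F, b, hF, rfl⟩ := hS
  obtain ⟨j, hj, huniq⟩ := h F hF b
  refine ⟨_, ⟨⟨j, rfl⟩, pair_subset_setOf_forall_eq_iff.mpr hj⟩, ?_⟩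
  rintro _ ⟨⟨k, rfl⟩, hk⟩
  rw [huniq k (pair_subset_setOf_forall_eq_iff.mp hk)]

end EdgeFamily

def ps42Pairs : Fin 8 → (Fin 4 → Bool) × (Fin 4 → Bool) :=
  ![(![false,false,false,false], ![true,false,false,false]),
    (![false,false,true,false], ![false,true,true,false]),
    (![false,false,false,true], ![false,false,true,true]),
    (![false,true,false,false], ![false,true,false,true]),
    (![false,true,true,true], ![true,true,true,true]),
    (![true,false,false,true], ![true,true,false,true]),
    (![true,true,false,false], ![true,true,true,false]),
    (![true,false,true,false], ![true,false,true,true])]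

theorem PS42_eq_edgeRange : PS42 = edgeRange ps42Pairs := by
  ext e
  simp [PS42, edgeRange, Fin.exists_fin_succ, ps42Pairs, eq_comm]

theorem stmt_3 :
    IsMatching 4 PS42 ∧
    ∀ S, IsSubcube 4 2 S → ∃! e, e ∈ PS42 ∧ e ⊆ S := by
  rw [PS42_eq_edgeRange]
  exact ⟨isMatching_edgeRange _ (by unfold QAdj; decide) (by decide),
    existsUnique_mem_edgeRange_subset _ (by decide)⟩
end

section
/- If there exists a matching M of Q_n such that every k-dimensional subcube of Q_n contains an edge of M, then there exists a matching M' of Q_{n+1} such that every (k+1)-dimensional subcube of Q_{n+1} contains an edge of M'. -/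
/-!
Take two copies of `M`, one in each facet `x (last n) = c` of `Q_{n+1}`; they are matchings on
disjoint vertex sets. A subcube of `Q_{n+1}` fixing a set `F` of `n - k` coordinates to `b` contains
the copy in facet `b (last n)` of the subcube of `Q_n` fixing the (at most `n - k`) coordinates of
`F` other than the last one, and that subcube contains a `k`-dimensional one, hence an edge of `M`.
-/
open Finset

variable {n k : ℕ}

lemma qAdj_snoc_iff {x y : Fin n → Bool} (c : Bool) :
    QAdj (Fin.snoc x c : Fin (n + 1) → Bool) (Fin.snoc y c) ↔ QAdj x y := by
  simp only [QAdj, card_filter, Fin.sum_univ_castSucc, Fin.snoc_castSucc, Fin.snoc_last,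
    ne_eq, not_true_eq_false, if_false, add_zero]

lemma QEdge.image_snoc {e : Set (Fin n → Bool)} (he : QEdge n e) (c : Bool) :
    QEdge (n + 1) ((Fin.snoc · c) '' e) := by
  obtain ⟨x, y, hxy, rfl⟩ := he
  exact ⟨Fin.snoc x c, Fin.snoc y c, (qAdj_snoc_iff c).2 hxy, Set.image_pair _ _ _⟩

def liftMatching (M : Set (Set (Fin n → Bool))) : Set (Set (Fin (n + 1) → Bool)) :=
  {s | ∃ e ∈ M, ∃ c : Bool, s = (Fin.snoc · c) '' e}

lemma IsMatching.liftMatching {M : Set (Set (Fin n → Bool))} (hM : IsMatching n M) :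
    IsMatching (n + 1) (liftMatching M) := by
  refine ⟨?_, ?_⟩
  · rintro s ⟨e, he, c, rfl⟩
    exact (hM.1 e he).image_snoc c
  · rintro s ⟨e, he, c, rfl⟩ t ⟨f, hf, d, rfl⟩ hst
    by_cases hcd : c = d
    · subst hcd
      have hef : e ≠ f := fun h => hst (h ▸ rfl)
      rw [← Set.image_inter (Fin.snoc_left_injective (α := fun _ => Bool) c),
        hM.2 e he f hf hef, Set.image_empty]
    · ext z
      simp only [Set.mem_inter_iff, Set.mem_image, Set.mem_empty_iff_false, iff_false]
      rintro ⟨⟨u, -, rfl⟩, ⟨v, -, huv⟩⟩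
      exact hcd (Fin.snoc_injective2 huv).2.symm

lemma Blocks.exists_subset_of_card_le {M : Set (Set (Fin n → Bool))} (hB : Blocks n k M)
    {F : Finset (Fin n)} (hF : #F ≤ n - k) (b : Fin n → Bool) :
    ∃ e ∈ M, e ⊆ {x | ∀ i ∈ F, x i = b i} := by
  obtain ⟨G, hFG, -, hG⟩ :=
    exists_subsuperset_card_eq (subset_univ F) hF (by simp [Nat.sub_le n k])
  obtain ⟨e, he, heG⟩ := hB {x | ∀ i ∈ G, x i = b i} ⟨G, b, hG, rfl⟩
  exact ⟨e, he, heG.trans fun x hx i hi => hx i (hFG hi)⟩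

lemma image_snoc_subset_subcube (F : Finset (Fin (n + 1))) (b : Fin (n + 1) → Bool) :
    (Fin.snoc · (b (Fin.last n))) '' {x : Fin n → Bool | ∀ i ∈ F.preimage Fin.castSucc
        (Fin.castSucc_injective n).injOn, x i = b i.castSucc} ⊆
      {x | ∀ i ∈ F, x i = b i} := by
  rintro _ ⟨w, hw, rfl⟩ i
  induction i using Fin.lastCases with
  | last => simp
  | cast i => simpa using hw i

lemma Blocks.liftMatching {M : Set (Set (Fin n → Bool))} (hB : Blocks n k M) :
    Blocks (n + 1) (k + 1) (liftMatching M) := by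
  rintro S ⟨F, b, hF, rfl⟩
  have hcard : #(F.preimage Fin.castSucc (Fin.castSucc_injective n).injOn) ≤ n - k :=
    calc _ ≤ #F := card_le_card_of_injOn Fin.castSucc (fun i hi => mem_preimage.1 hi)
            (Fin.castSucc_injective n).injOn
      _ = n - k := hF.trans (Nat.add_sub_add_right n 1 k)
  obtain ⟨e, he, heS⟩ := hB.exists_subset_of_card_le hcard (fun i => b i.castSucc)
  exact ⟨_, ⟨e, he, _, rfl⟩, (Set.image_mono heS).trans (image_snoc_subset_subcube F b)⟩

theorem stmt_6 (n k : ℕ)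
    (h : ∃ M, IsMatching n M ∧ Blocks n k M) :
    ∃ M', IsMatching (n + 1) M' ∧ Blocks (n + 1) (k + 1) M' := by
  obtain ⟨M, hM, hB⟩ := h
  exact ⟨liftMatching M, hM.liftMatching, hB.liftMatching⟩
end

section
/- If there exists a matching of Q_n blocking all k-dimensional subcubes (i.e., every k-dimensional subcube contains an edge of the matching) with k ≥ n/3 + 1, then there exists a matching of Q_{4n} blocking all (4k-3)-dimensional subcubes. -/
/-!
Write a vertex of `Q_{4n}` as four blocks `x₀, …, x₃ ∈ Q_n` and record their parities as a
pattern `p ∈ Q_4`. Fix the perfect matching of `Q_4` pairing `p` with `p` flipped at coordinate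
`q4Dir p`, and match `x` by replacing its block `q4Dir p` by its `M`-partner. This flips the
parity of that block only, so the direction is unchanged and the construction is an involution.

A `(4k-3)`-subcube of `Q_{4n}` fixes `4(n-k)+3` coordinates. Since `3k ≥ n + 3`, at most two
blocks are fixed entirely, and there is a pattern, compatible with the parities of those blocks,
whose direction is a block with at most `n - k` fixed coordinates. The `k`-subcube of `Q_n` in that
block contains an `M`-edge, which is oriented to have the pattern's parity, and the other blocks
are filled in with the parities the pattern prescribes.
-/

open Finset Function

section Hypercube

variable {n : ℕ}

lemma qAdj_iff_hammingDist {x y : Fin n → Bool} : QAdj x y ↔ hammingDist x y = 1 := Iff.rfl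

lemma QAdj.symm {x y : Fin n → Bool} (h : QAdj x y) : QAdj y x := by
  rwa [qAdj_iff_hammingDist, hammingDist_comm]

lemma QAdj.ne {x y : Fin n → Bool} (h : QAdj x y) : x ≠ y := by
  rintro rfl
  simp [QAdj] at h

lemma QAdj.pos {x y : Fin n → Bool} (h : QAdj x y) : 0 < n := by
  rcases n with _ | n
  · simp [QAdj] at h
  · exact n.succ_pos

lemma qAdj_update_not (x : Fin n → Bool) (c : Fin n) : QAdj x (update x c (!x c)) := by
  rw [QAdj, card_eq_one]
  refine ⟨c, ext fun i => ?_⟩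
  rcases eq_or_ne i c with rfl | hi <;> simp [*]

lemma card_true_add_card_true (u v : Fin n → Bool) :
    #{i | u i = true} + #{i | v i = true} =
      2 * #{i | u i = true ∧ v i = true} + hammingDist u v := by
  simp only [hammingDist, card_filter, ← sum_add_distrib, mul_sum]
  refine sum_congr rfl fun i _ => ?_
  cases u i <;> cases v i <;> rfl

lemma parity_lt_two (x : Fin n → Bool) : parity x < 2 := Nat.mod_lt _ two_pos

lemma parity_ne_of_qAdj {u v : Fin n → Bool} (h : QAdj u v) : parity u ≠ parity v := by
  have hsum := card_true_add_card_true u v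
  rw [qAdj_iff_hammingDist.1 h] at hsum
  unfold parity
  omega

def parityBit (x : Fin n → Bool) : Bool := decide (parity x = 1)

lemma parityBit_of_qAdj {u v : Fin n → Bool} (h : QAdj u v) : parityBit v = !parityBit u := by
  have hne := parity_ne_of_qAdj h
  have hu := parity_lt_two u
  have hv := parity_lt_two v
  rw [parityBit, parityBit, ← decide_not, decide_eq_decide]
  omega

lemma exists_parityBit_eq (F : Finset (Fin n)) (β : Fin n → Bool) (b : Bool)
    (hfull : #F = n → parityBit β = b) : ∃ z, (∀ r ∈ F, z r = β r) ∧ parityBit z = b := by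
  by_cases hβ : parityBit β = b
  · exact ⟨β, fun _ _ => rfl, hβ⟩
  have hlt : #F < Fintype.card (Fin n) :=
    (card_le_univ F).lt_of_ne fun h => hβ (hfull (h.trans (Fintype.card_fin n)))
  obtain ⟨r, -, hr⟩ := exists_mem_notMem_of_card_lt_card hlt
  refine ⟨update β r (!β r), fun i hi => update_of_ne (ne_of_mem_of_not_mem hi hr) _ _, ?_⟩
  rw [parityBit_of_qAdj (qAdj_update_not β r)]
  cases b <;> simp_all

lemma QAdj.exists_parityBit_eq {a₁ a₂ : Fin n → Bool} (h : QAdj a₁ a₂) (b : Bool) :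
    ∃ y v, ({y, v} : Set (Fin n → Bool)) = {a₁, a₂} ∧ parityBit y = b := by
  by_cases h₁ : parityBit a₁ = b
  · exact ⟨a₁, a₂, rfl, h₁⟩
  · refine ⟨a₂, a₁, Set.pair_comm _ _, ?_⟩
    rw [parityBit_of_qAdj h]
    cases b <;> simp_all

section Matching

variable {M : Set (Set (Fin n → Bool))}

lemma IsMatching.qAdj_of_mem (hM : IsMatching n M) {u v : Fin n → Bool}
    (h : ({u, v} : Set (Fin n → Bool)) ∈ M) : QAdj u v := by
  obtain ⟨a, b, hab, he⟩ := hM.1 _ h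
  rcases Set.pair_eq_pair_iff.1 he with ⟨rfl, rfl⟩ | ⟨rfl, rfl⟩
  · exact hab
  · exact hab.symm

lemma IsMatching.eq_of_mem (hM : IsMatching n M) {u v v' : Fin n → Bool}
    (h : ({u, v} : Set (Fin n → Bool)) ∈ M) (h' : ({u, v'} : Set (Fin n → Bool)) ∈ M) :
    v = v' := by
  have he : ({u, v} : Set (Fin n → Bool)) = {u, v'} := by
    by_contra hne
    exact (Set.eq_empty_iff_forall_notMem.1 (hM.2 _ h _ h' hne)) u ⟨by simp, by simp⟩
  rcases Set.pair_eq_pair_iff.1 he with ⟨-, hv⟩ | ⟨-, hvu⟩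
  · exact hv
  · exact absurd hvu.symm (hM.qAdj_of_mem h).ne

lemma IsMatching.pos_of_blocks {k : ℕ} (hM : IsMatching n M) (hB : Blocks n k M) : 0 < n := by
  obtain ⟨F, -, hF⟩ := exists_subset_card_eq (s := (univ : Finset (Fin n))) (n := n - k)
    (by simp)
  obtain ⟨e, he, -⟩ := hB _ ⟨F, fun _ => false, hF, rfl⟩
  obtain ⟨x, y, hxy, -⟩ := hM.1 e he
  exact hxy.pos

end Matching

lemma isMatching_of_rel (R : (Fin n → Bool) → (Fin n → Bool) → Prop)
    (hadj : ∀ x y, R x y → QAdj x y) (hsymm : ∀ x y, R x y → R y x)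
    (hunique : ∀ x y y', R x y → R x y' → y = y') :
    IsMatching n {e | ∃ x y, R x y ∧ e = {x, y}} := by
  have hpresent : ∀ e ∈ ({e | ∃ x y, R x y ∧ e = {x, y}} : Set (Set (Fin n → Bool))),
      ∀ z ∈ e, ∃ y, R z y ∧ e = {z, y} := by
    rintro e ⟨x, y, hxy, rfl⟩ z (rfl | rfl)
    · exact ⟨y, hxy, rfl⟩
    · exact ⟨x, hsymm _ _ hxy, Set.pair_comm _ _⟩
  refine ⟨fun e ⟨x, y, hxy, he⟩ => ⟨x, y, hadj x y hxy, he⟩, fun e he f hf hne => ?_⟩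
  refine Set.eq_empty_iff_forall_notMem.2 fun z ⟨hze, hzf⟩ => hne ?_
  obtain ⟨y, hy, rfl⟩ := hpresent e he z hze
  obtain ⟨y', hy', rfl⟩ := hpresent f hf z hzf
  rw [hunique z y y' hy hy']

end Hypercube

namespace CubeMatching

variable {n : ℕ}

section Blocks

variable {m : ℕ}

def toBlocks : (Fin (m * n) → Bool) ≃ (Fin m → Fin n → Bool) :=
  (finProdFinEquiv.arrowCongr (Equiv.refl Bool)).symm.trans (Equiv.curry _ _ _)

@[simp]
lemma toBlocks_apply (x : Fin (m * n) → Bool) (j : Fin m) (r : Fin n) :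
    toBlocks x j r = x (finProdFinEquiv (j, r)) := rfl

lemma card_filter_eq_sum_blocks (p : Fin (m * n) → Prop) [DecidablePred p] :
    #{i | p i} = ∑ j, #{r | p (finProdFinEquiv (j, r))} := by
  simp only [card_filter]
  rw [← finProdFinEquiv.sum_comp, Fintype.sum_prod_type]

lemma hammingDist_toBlocks (x y : Fin (m * n) → Bool) :
    hammingDist x y = ∑ j, hammingDist (toBlocks x j) (toBlocks y j) :=
  card_filter_eq_sum_blocks _

lemma qAdj_of_toBlocks_eq_update {x y : Fin (m * n) → Bool} {d : Fin m} {v : Fin n → Bool}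
    (h : QAdj (toBlocks x d) v) (hy : toBlocks y = update (toBlocks x) d v) : QAdj x y := by
  rw [qAdj_iff_hammingDist, hammingDist_toBlocks, sum_eq_single d, hy, update_self]
  · exact h
  · intro j _ hj
    rw [hy, update_of_ne hj, hammingDist_self]
  · simp

def slice (F : Finset (Fin (m * n))) (j : Fin m) : Finset (Fin n) :=
  {r | finProdFinEquiv (j, r) ∈ F}

lemma sum_card_slice (F : Finset (Fin (m * n))) : ∑ j, #(slice F j) = #F := by
  classical
  conv_rhs => rw [← filter_univ_mem F]
  rw [card_filter_eq_sum_blocks]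
  rfl

lemma forall_mem_eq_iff_slice {F : Finset (Fin (m * n))} {x b : Fin (m * n) → Bool} :
    (∀ i ∈ F, x i = b i) ↔ ∀ j, ∀ r ∈ slice F j, toBlocks x j r = toBlocks b j r := by
  constructor
  · intro h j r hr
    exact h _ (by simpa [slice] using hr)
  · intro h i hi
    obtain ⟨⟨j, r⟩, rfl⟩ := finProdFinEquiv.surjective i
    exact h j r (by simpa [slice] using hi)

def pattern (x : Fin (m * n) → Bool) : Fin m → Bool := fun j => parityBit (toBlocks x j)

lemma pattern_of_toBlocks_eq_update {x y : Fin (m * n) → Bool} {d : Fin m} {v : Fin n → Bool}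
    (hy : toBlocks y = update (toBlocks x) d v) :
    pattern y = update (pattern x) d (parityBit v) := by
  funext j
  rcases eq_or_ne j d with rfl | hj
  · simp [pattern, hy]
  · simp [pattern, hy, update_of_ne hj]

def LiftRel (D : (Fin m → Bool) → Fin m) (M : Set (Set (Fin n → Bool)))
    (x y : Fin (m * n) → Bool) : Prop :=
  ∃ v, ({toBlocks x (D (pattern x)), v} : Set (Fin n → Bool)) ∈ M ∧
    toBlocks y = update (toBlocks x) (D (pattern x)) v

def liftMatching (D : (Fin m → Bool) → Fin m) (M : Set (Set (Fin n → Bool))) :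
    Set (Set (Fin (m * n) → Bool)) :=
  {e | ∃ x y, LiftRel D M x y ∧ e = {x, y}}

lemma isMatching_liftMatching {D : (Fin m → Bool) → Fin m}
    (hD : ∀ p b, D (update p (D p) b) = D p) {M : Set (Set (Fin n → Bool))}
    (hM : IsMatching n M) : IsMatching (m * n) (liftMatching D M) := by
  apply isMatching_of_rel
  · rintro x y ⟨v, hv, hy⟩
    exact qAdj_of_toBlocks_eq_update (hM.qAdj_of_mem hv) hy
  · rintro x y ⟨v, hv, hy⟩
    have hd : D (pattern y) = D (pattern x) := by rw [pattern_of_toBlocks_eq_update hy, hD]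
    refine ⟨toBlocks x (D (pattern x)), ?_, ?_⟩
    · rwa [hd, hy, update_self, Set.pair_comm]
    · rw [hd, hy, update_idem, update_eq_self]
  · rintro x y y' ⟨v, hv, hy⟩ ⟨v', hv', hy'⟩
    apply toBlocks.injective
    rw [hy, hy', hM.eq_of_mem hv hv']

end Blocks

/-- The perfect matching of `Q_4` that pairs `p` with `p` flipped at coordinate `q4Dir p`. -/
def q4Dir (p : Fin 4 → Bool) : Fin 4 :=
  match p 0, p 1, p 2, p 3 with
  | false, false, false, false => 0
  | true , false, false, false => 0
  | false, true , true , true  => 0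
  | true , true , true , true  => 0
  | false, false, true , false => 1
  | false, true , true , false => 1
  | true , false, false, true  => 1
  | true , true , false, true  => 1
  | false, false, false, true  => 2
  | false, false, true , true  => 2
  | true , true , false, false => 2
  | true , true , true , false => 2
  | false, true , false, false => 3
  | false, true , false, true  => 3
  | true , false, true , false => 3
  | true , false, true , true  => 3

lemma q4Dir_update : ∀ (p : Fin 4 → Bool) (b : Bool), q4Dir (update p (q4Dir p) b) = q4Dir p := by
  decide

lemma exists_q4Dir_eq : ∀ (d j : Fin 4), j ≠ d → ∀ b : Bool, ∃ p, q4Dir p = d ∧ p j = b := by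
  decide

lemma exists_q4Dir_ne : ∀ (j l : Fin 4), j ≠ l → ∀ bj bl : Bool,
    ∃ p, p j = bj ∧ p l = bl ∧ q4Dir p ≠ j ∧ q4Dir p ≠ l := by
  decide

lemma add_add_le_sum {ι : Type*} [Fintype ι] [DecidableEq ι] (f : ι → ℕ) {a b c : ι}
    (hab : a ≠ b) (hac : a ≠ c) (hbc : b ≠ c) : f a + f b + f c ≤ ∑ i, f i := by
  have h : ∑ i ∈ {a, b, c}, f i = f a + f b + f c := by
    rw [sum_insert (by simp [hab, hac]), sum_pair hbc, add_assoc]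
  exact h ▸ sum_le_sum_of_subset (subset_univ _)

/-- `c j` is the number of fixed coordinates in block `j`, and `w j` the parity forced on a
block whose coordinates are all fixed. -/
lemma exists_pattern {k : ℕ} (hn : 0 < n) (hk : n + 3 ≤ 3 * k) (c : Fin 4 → ℕ)
    (hsum : ∑ j, c j = 4 * n - (4 * k - 3)) (w : Fin 4 → Bool) :
    ∃ p, c (q4Dir p) ≤ n - k ∧ ∀ j, c j = n → p j = w j := by
  by_cases htwo : ∃ j l, j ≠ l ∧ c j = n ∧ c l = n
  · obtain ⟨j, l, hjl, hj, hl⟩ := htwo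
    obtain ⟨p, hpj, hpl, hdj, hdl⟩ := exists_q4Dir_ne j l hjl (w j) (w l)
    refine ⟨p, ?_, fun t ht => ?_⟩
    · have := add_add_le_sum c hdj hdl hjl
      omega
    · by_cases htj : t = j
      · exact htj ▸ hpj
      by_cases htl : t = l
      · exact htl ▸ hpl
      have := add_add_le_sum c htj htl hjl
      omega
  push Not at htwo
  obtain ⟨d, hd⟩ : ∃ d, c d ≤ n - k := by
    by_contra! hall
    have := hall 0; have := hall 1; have := hall 2; have := hall 3
    rw [Fin.sum_univ_four] at hsum
    omega
  obtain ⟨j, hjd, hj⟩ : ∃ j, j ≠ d ∧ ∀ t, c t = n → t = j := by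
    by_cases hfull : ∃ j, c j = n
    · obtain ⟨j, hj⟩ := hfull
      refine ⟨j, fun h => ?_, fun t ht => by_contra fun htj => htwo t j htj ht hj⟩
      subst h
      omega
    · push Not at hfull
      exact ⟨d + 1, (by decide : ∀ d : Fin 4, d + 1 ≠ d) d, fun t ht => absurd ht (hfull t)⟩
  obtain ⟨p, rfl, hpj⟩ := exists_q4Dir_eq d j hjd (w j)
  exact ⟨p, hd, fun t ht => hj t ht ▸ hpj⟩

lemma blocks_liftMatching {k : ℕ} {M : Set (Set (Fin n → Bool))} (hM : IsMatching n M)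
    (hB : Blocks n k M) (hk : n + 3 ≤ 3 * k) :
    Blocks (4 * n) (4 * k - 3) (liftMatching q4Dir M) := by
  rintro S ⟨F, b, hF, rfl⟩
  obtain ⟨P, hPd, hPfull⟩ := exists_pattern (hM.pos_of_blocks hB) hk (fun j => #(slice F j))
    (by rw [sum_card_slice, hF]) (fun j => parityBit (toBlocks b j))
  obtain ⟨d, hd⟩ : ∃ d, q4Dir P = d := ⟨_, rfl⟩
  rw [hd] at hPd
  obtain ⟨G, hFG, hG⟩ :=
    exists_superset_card_eq hPd ((n.sub_le k).trans_eq (Fintype.card_fin n).symm)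
  obtain ⟨e, he, heT⟩ := hB _ ⟨G, toBlocks b d, hG, rfl⟩
  obtain ⟨a₁, a₂, ha, rfl⟩ := hM.1 e he
  obtain ⟨y, v, hyv, hy⟩ := ha.exists_parityBit_eq (P d)
  rw [← hyv] at he heT
  choose z hzF hzP using fun j =>
    exists_parityBit_eq (slice F j) (toBlocks b j) (P j) fun h => (hPfull j h).symm
  have hS : ∀ w ∈ ({y, v} : Set (Fin n → Bool)), ∀ i ∈ F,
      toBlocks.symm (update z d w) i = b i := by
    intro w hw
    rw [forall_mem_eq_iff_slice]
    intro j r hr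
    rw [Equiv.apply_symm_apply]
    rcases eq_or_ne j d with rfl | hj
    · rw [update_self]
      exact heT hw r (hFG hr)
    · rw [update_of_ne hj]
      exact hzF j r hr
  have hpat : pattern (toBlocks.symm (update z d y)) = P := by
    funext j
    rcases eq_or_ne j d with rfl | hj
    · simp [pattern, hy]
    · simp [pattern, update_of_ne hj, hzP]
  refine ⟨{toBlocks.symm (update z d y), toBlocks.symm (update z d v)},
    ⟨_, _, ⟨v, ?_, ?_⟩, rfl⟩, ?_⟩
  · simpa [hpat, hd] using he
  · simp [hpat, hd]
  · rintro x (rfl | rfl)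
    · exact hS y (by simp)
    · exact hS v (by simp)

end CubeMatching

open CubeMatching

theorem stmt_9 (n k : ℕ) (hk : (k : ℚ) ≥ (n : ℚ) / 3 + 1)
    (h : ∃ M, IsMatching n M ∧ Blocks n k M) :
    ∃ M', IsMatching (4 * n) M' ∧ Blocks (4 * n) (4 * k - 3) M' := by
  obtain ⟨M, hM, hB⟩ := h
  have hk' : n + 3 ≤ 3 * k := by
    have : (n : ℚ) + 3 ≤ 3 * k := by linarith
    exact_mod_cast this
  exact ⟨liftMatching q4Dir M, isMatching_liftMatching q4Dir_update hM,
    blocks_liftMatching hM hB hk'⟩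
end

section
/- If there exists a matching of Q_n with k = ⌊n/3⌋ + 1 such that every k-dimensional subcube of Q_n contains an edge of the matching, then there exists a matching of Q_{4n} such that every (⌊4n/3⌋ + 1)-dimensional subcube of Q_{4n} contains an edge of the matching. -/
/-!
Write `Q_{4n} = (Q_n)^4` and record the parities of the four blocks of a vertex `x` as a
vector `π x ∈ {0,1}^4`. A selector `select : {0,1}^4 → Fin 4` whose value `j` never depends
on the `j`-th coordinate lets us place copies of `M` in block `j` of exactly those vertices
with `select (π x) = j`: an edge inside block `j` only changes the parity of block `j`, so
both endpoints select the same block, and distinct lifted edges are disjoint.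

A face of dimension `⌊4n/3⌋ + 1` spreads its free coordinates over the four blocks. Either at
most one block gets none of them, and then some block gets at least `⌊n/3⌋ + 1`; or exactly
two blocks get none, and then each of the other two gets at least `⌊n/3⌋ + 1`. In both cases
a finite check shows that the parities of the blocks with free coordinates can be chosen so
that `select` picks a block with at least `⌊n/3⌋ + 1` free coordinates, and there `M` has an
edge inside the face.
-/

open Finset Function

namespace HypercubeMatching

def face {N : ℕ} (F : Finset (Fin N)) (b : Fin N → Bool) : Set (Fin N → Bool) :=
  {x | ∀ i ∈ F, x i = b i}

theorem exists_subset_face_of_blocks {n k : ℕ} {M : Set (Set (Fin n → Bool))}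
    (hB : Blocks n k M) {F : Finset (Fin n)} (hF : #F ≤ n - k) (b : Fin n → Bool) :
    ∃ e ∈ M, e ⊆ face F b := by
  obtain ⟨F', hFF', -, hF'⟩ := exists_subsuperset_card_eq (subset_univ F) hF (by simp)
  obtain ⟨e, he, heS⟩ := hB (face F' b) ⟨F', b, hF', rfl⟩
  exact ⟨e, he, heS.trans fun x hx i hi => hx i (hFF' hi)⟩

theorem pos_of_blocks {n k : ℕ} {M : Set (Set (Fin n → Bool))} (hM : ∀ e ∈ M, QEdge n e)
    (hB : Blocks n k M) : 0 < n := by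
  obtain ⟨e, he, -⟩ := exists_subset_face_of_blocks hB (F := ∅) (Nat.zero_le _) fun _ => false
  obtain ⟨x, y, hxy, -⟩ := hM e he
  exact Nat.pos_of_ne_zero fun hn => by subst hn; simp [QAdj] at hxy

section BlockDecomposition

variable {m n : ℕ}

def blockEquiv : (Fin (m * n) → Bool) ≃ (Fin m → Fin n → Bool) :=
  (finProdFinEquiv.arrowCongr (Equiv.refl Bool)).symm.trans (Equiv.curry _ _ _)

theorem card_filter_eq_sum_blocks (P : Fin (m * n) → Prop) [DecidablePred P] :
    #{i | P i} = ∑ j : Fin m, #{t : Fin n | P (finProdFinEquiv (j, t))} := by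
  have hreindex : #{i | P i} = #{p : Fin m × Fin n | P (finProdFinEquiv p)} := by
    rw [← card_map finProdFinEquiv.symm.toEmbedding]
    congr 1
    ext
    simp only [mem_map_equiv, mem_filter, mem_univ, true_and, Equiv.symm_symm]
  simp only [hreindex, card_filter]
  exact Fintype.sum_prod_type _

theorem hammingDist_eq_sum_blocks (x y : Fin (m * n) → Bool) :
    hammingDist x y = ∑ j, hammingDist (blockEquiv x j) (blockEquiv y j) :=
  card_filter_eq_sum_blocks _

theorem mem_face_iff_blockEquiv {F : Finset (Fin (m * n))} {b x : Fin (m * n) → Bool} :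
    x ∈ face F b ↔
      ∀ j t, finProdFinEquiv (j, t) ∈ F → blockEquiv x j t = blockEquiv b j t := by
  refine ⟨fun h j t ht => h _ ht, fun h i hi => ?_⟩
  obtain ⟨⟨j, t⟩, rfl⟩ := finProdFinEquiv.surjective i
  exact h j t hi

def blockInsert (c : Fin (m * n) → Bool) (j : Fin m) (u : Fin n → Bool) :
    Fin (m * n) → Bool :=
  blockEquiv.symm (update (blockEquiv c) j u)

@[simp]
theorem blockEquiv_blockInsert (c : Fin (m * n) → Bool) (j : Fin m) (u : Fin n → Bool) :
    blockEquiv (blockInsert c j u) = update (blockEquiv c) j u := by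
  simp [blockInsert]

theorem qAdj_blockInsert {u v : Fin n → Bool} (c : Fin (m * n) → Bool) (j : Fin m)
    (huv : QAdj u v) : QAdj (blockInsert c j u) (blockInsert c j v) := by
  change hammingDist _ _ = 1
  rw [hammingDist_eq_sum_blocks, sum_eq_single j (fun i _ hi => by simp [update_of_ne hi])
    (by simp)]
  simp only [blockEquiv_blockInsert, update_self]
  exact huv

theorem blockInsert_congr {c c' : Fin (m * n) → Bool} {j : Fin m} {u u' : Fin n → Bool}
    (h : blockInsert c j u = blockInsert c' j u') : blockInsert c j = blockInsert c' j := by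
  funext w
  apply blockEquiv.injective
  funext i
  by_cases hi : i = j
  · subst hi
    simp
  · simpa [update_of_ne hi] using congrFun (congrArg blockEquiv h) i

theorem blockInsert_mem_face {F : Finset (Fin (m * n))} {b c : Fin (m * n) → Bool} {j : Fin m}
    {u : Fin n → Bool} (hc : c ∈ face F b)
    (hu : ∀ t, finProdFinEquiv (j, t) ∈ F → u t = blockEquiv b j t) :
    blockInsert c j u ∈ face F b := by
  rw [mem_face_iff_blockEquiv] at hc ⊢
  intro i t ht
  by_cases hi : i = j
  · subst hi
    simpa only [blockEquiv_blockInsert, update_self] using hu t ht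
  · simpa only [blockEquiv_blockInsert, update_of_ne hi] using hc i t ht

end BlockDecomposition

def oddBit {n : ℕ} (v : Fin n → Bool) : Bool :=
  decide (parity v = 1)

theorem oddBit_update_true {n : ℕ} {v : Fin n → Bool} {t : Fin n} (ht : v t = false) :
    oddBit (update v t true) = !oddBit v := by
  have hcard : #{i | update v t true i = true} = #{i | v i = true} + 1 := by
    rw [← card_insert_of_notMem (a := t) (s := {i | v i = true}) (by simp [ht])]
    congr 1
    ext i
    by_cases hi : i = t
    · subst hi; simp
    · simp [hi]
  simp only [oddBit, parity, hcard]
  rcases Nat.mod_two_eq_zero_or_one #{i | v i = true} with h2 | h2 <;> simp [h2, Nat.add_mod]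

theorem oddBit_update_not {n : ℕ} (v : Fin n → Bool) (t : Fin n) :
    oddBit (update v t (!v t)) = !oddBit v := by
  cases ht : v t
  · exact oddBit_update_true ht
  · obtain ⟨w, hw, rfl⟩ : ∃ w, w t = false ∧ v = update w t true :=
      ⟨update v t false, by simp, by simp [← ht]⟩
    rw [oddBit_update_true hw, Bool.not_true, update_idem, update_eq_self_iff.2 hw.symm,
      Bool.not_not]

theorem exists_oddBit_eq {n : ℕ} (w : Fin n → Bool) (t₀ : Fin n) (β : Bool) :
    ∃ v, (∀ t ≠ t₀, v t = w t) ∧ oddBit v = β := by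
  by_cases hw : oddBit w = β
  · exact ⟨w, fun _ _ => rfl, hw⟩
  · refine ⟨update w t₀ (!w t₀), fun t ht => update_of_ne ht _ _, ?_⟩
    rw [oddBit_update_not]
    cases β <;> simp_all

theorem exists_mem_face_oddBit_blockEquiv_eq {m n : ℕ} (F : Finset (Fin (m * n)))
    (b : Fin (m * n) → Bool) (q : Fin m → Bool)
    (hq : ∀ i, (∀ t, finProdFinEquiv (i, t) ∈ F) → q i = oddBit (blockEquiv b i)) :
    ∃ c ∈ face F b, ∀ i, oddBit (blockEquiv c i) = q i := by
  have hblock : ∀ i, ∃ v : Fin n → Bool,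
      (∀ t, finProdFinEquiv (i, t) ∈ F → v t = blockEquiv b i t) ∧ oddBit v = q i := by
    intro i
    by_cases hfree : ∃ t₀, finProdFinEquiv (i, t₀) ∉ F
    · obtain ⟨t₀, ht₀⟩ := hfree
      obtain ⟨v, hv, hvq⟩ := exists_oddBit_eq (blockEquiv b i) t₀ (q i)
      exact ⟨v, fun t ht => hv t (by rintro rfl; exact ht₀ ht), hvq⟩
    · push Not at hfree
      exact ⟨blockEquiv b i, fun _ _ => rfl, (hq i hfree).symm⟩
  choose v hvF hvq using hblock
  refine ⟨blockEquiv.symm v, mem_face_iff_blockEquiv.2 ?_, ?_⟩ <;>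
    simp only [Equiv.apply_symm_apply]
  exacts [hvF, hvq]

-- The level sets are `{q₁ = q₂ = q₃}`, `{q₀ = q₂ ≠ q₃}`, `{q₀ = q₃ ≠ q₁}`, `{q₀ = q₁ ≠ q₂}`.
def select (q : Fin 4 → Bool) : Fin 4 :=
  if q 1 = q 2 ∧ q 2 = q 3 then 0
  else if q 0 = q 2 ∧ q 2 ≠ q 3 then 1
  else if q 0 = q 3 ∧ q 3 ≠ q 1 then 2
  else 3

theorem select_eq_of_eq_of_ne : ∀ (q q' : Fin 4 → Bool) (j : Fin 4), select q = j →
    (∀ i ≠ j, q' i = q i) → select q' = j := by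
  decide

theorem exists_select_eq_of_card_le_one : ∀ (Z : Finset (Fin 4)) (j : Fin 4), j ∉ Z →
    #Z ≤ 1 → ∀ p : Fin 4 → Bool, ∃ q, select q = j ∧ ∀ i ∈ Z, q i = p i := by
  decide

theorem exists_select_notMem_of_card_eq_two : ∀ Z : Finset (Fin 4), #Z = 2 →
    ∀ p : Fin 4 → Bool, ∃ q, select q ∉ Z ∧ ∀ i ∈ Z, q i = p i := by
  decide

theorem exists_select_large {n : ℕ} (g : Fin 4 → ℕ) (hg : ∀ j, g j ≤ n)
    (hsum : ∑ j, g j = 4 * n / 3 + 1) (p : Fin 4 → Bool) :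
    ∃ q, n / 3 < g (select q) ∧ ∀ i, g i = 0 → q i = p i := by
  set Z : Finset (Fin 4) := {i | g i = 0}
  set Y : Finset (Fin 4) := {i | g i ≠ 0}
  have hZY : #Z + #Y = 4 := card_filter_add_card_filter_not (s := univ) _
  have hY : ∑ i ∈ Y, g i = 4 * n / 3 + 1 := (sum_filter_ne_zero _).trans hsum
  have hYcard : 4 * n / 3 + 1 ≤ #Y * n := by
    simpa [hY] using sum_le_card_nsmul Y g n fun i _ => hg i
  have hZcard : #Z ≤ 2 := by
    by_contra!
    have := Nat.mul_le_mul_right n (show #Y ≤ 1 by omega)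
    omega
  rcases Nat.lt_or_ge #Z 2 with hZ | hZ
  · obtain ⟨j, -, hj⟩ := exists_lt_of_sum_lt (s := univ) (f := fun _ => n / 3) (g := g)
      (by simp; omega)
    obtain ⟨q, rfl, hq⟩ := exists_select_eq_of_card_le_one Z j (by simp [Z]; omega) (by omega) p
    exact ⟨q, hj, fun i hi => hq i (by simpa [Z] using hi)⟩
  · obtain ⟨q, hqZ, hq⟩ := exists_select_notMem_of_card_eq_two Z (by omega) p
    refine ⟨q, ?_, fun i hi => hq i (by simpa [Z] using hi)⟩
    have hjY : select q ∈ Y := by simpa [Y, Z] using hqZ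
    have hrest : ∑ i ∈ Y.erase (select q), g i ≤ n := by
      simpa [card_erase_of_mem hjY, show #Y = 2 by omega] using
        sum_le_card_nsmul (Y.erase (select q)) g n fun i _ => hg i
    have := add_sum_erase Y g hjY
    omega

section Lift

variable {n : ℕ}

def blockParities (x : Fin (4 * n) → Bool) : Fin 4 → Bool :=
  fun j => oddBit (blockEquiv x j)

theorem select_blockParities_blockInsert {c : Fin (4 * n) → Bool} {j : Fin 4}
    (hc : select (blockParities c) = j) (u : Fin n → Bool) :
    select (blockParities (blockInsert c j u)) = j :=
  select_eq_of_eq_of_ne _ _ _ hc fun i hi => by simp [blockParities, update_of_ne hi]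

def liftMatching (M : Set (Set (Fin n → Bool))) : Set (Set (Fin (4 * n) → Bool)) :=
  {E | ∃ j c, select (blockParities c) = j ∧ ∃ e ∈ M, E = blockInsert c j '' e}

theorem isMatching_liftMatching {M : Set (Set (Fin n → Bool))} (hM : IsMatching n M) :
    IsMatching (4 * n) (liftMatching M) := by
  refine ⟨?_, ?_⟩
  · rintro _ ⟨j, c, -, e, he, rfl⟩
    obtain ⟨u, v, huv, rfl⟩ := hM.1 e he
    exact ⟨_, _, qAdj_blockInsert c j huv, Set.image_pair _ _ _⟩
  · rintro _ ⟨j, c, hc, e, he, rfl⟩ _ ⟨j', c', hc', e', he', rfl⟩ hne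
    rw [Set.eq_empty_iff_forall_notMem]
    rintro _ ⟨⟨u, hu, rfl⟩, u', hu', hx⟩
    obtain rfl : j = j' :=
      (select_blockParities_blockInsert hc u).symm.trans
        (hx ▸ select_blockParities_blockInsert hc' u')
    obtain rfl : u = u' := by simpa using congrFun (congrArg blockEquiv hx.symm) j
    obtain rfl : e = e' := by
      by_contra hee
      exact (hM.2 e he e' he' hee).subset ⟨hu, hu'⟩
    exact hne (by rw [blockInsert_congr hx])

theorem blocks_liftMatching {M : Set (Set (Fin n → Bool))} (hn : 0 < n)
    (hB : Blocks n (n / 3 + 1) M) : Blocks (4 * n) (4 * n / 3 + 1) (liftMatching M) := by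
  rintro _ ⟨F, b, hF, rfl⟩
  have hsum : ∑ j : Fin 4, #{t : Fin n | finProdFinEquiv (j, t) ∉ F} = 4 * n / 3 + 1 := by
    rw [← card_filter_eq_sum_blocks (· ∉ F), filter_notMem_eq_sdiff, card_univ_sdiff, hF]
    simp only [Fintype.card_fin]
    omega
  obtain ⟨q, hbig, hq⟩ := exists_select_large _ (fun j => (card_filter_le _ _).trans (by simp))
    hsum fun i => oddBit (blockEquiv b i)
  obtain ⟨c, hcF, hcq⟩ := exists_mem_face_oddBit_blockEquiv_eq F b q fun i hi =>
    hq i (by simp [hi])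
  have hfixed : #{t : Fin n | finProdFinEquiv (select q, t) ∈ F} ≤ n - (n / 3 + 1) := by
    have := card_filter_add_card_filter_not
      (s := univ) (fun t : Fin n => finProdFinEquiv (select q, t) ∈ F)
    simp only [card_univ, Fintype.card_fin] at this
    omega
  obtain ⟨e, he, heF⟩ := exists_subset_face_of_blocks hB hfixed (blockEquiv b (select q))
  have hc : select (blockParities c) = select q := congrArg select (funext hcq)
  refine ⟨_, ⟨select q, c, hc, e, he, rfl⟩, ?_⟩
  rintro _ ⟨u, hu, rfl⟩
  exact blockInsert_mem_face hcF fun t ht => heF hu t (by simpa using ht)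

end Lift

end HypercubeMatching

theorem stmt_10 (n : ℕ)
    (h : ∃ M, IsMatching n M ∧ Blocks n (n / 3 + 1) M) :
    ∃ M', IsMatching (4 * n) M' ∧ Blocks (4 * n) (4 * n / 3 + 1) M' := by
  obtain ⟨M, hM, hB⟩ := h
  exact ⟨HypercubeMatching.liftMatching M, HypercubeMatching.isMatching_liftMatching hM,
    HypercubeMatching.blocks_liftMatching (HypercubeMatching.pos_of_blocks hM.1 hB) hB⟩
end

section
/- For every k ≥ 1, the set of even-parity vertices of Q_{2^k} can be partitioned into 2^k subsets A_1, ..., A_{2^k}, and the set of odd-parity vertices into 2^k subsets B_1, ..., B_{2^k}, such that every subcube of Q_{2^k} of dimension 2^{k-1} + 1 contains at least one vertex from each A_j and at least one vertex from each B_j. -/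
/-!
Label the `2^k` coordinates bijectively by the vectors `ℓ i` of `𝔽₂^k` and send a vertex `x`
to `σ x = ∑_{x i = 1} (ℓ i, 1) ∈ 𝔽₂^k × 𝔽₂`, whose last entry is the parity of `x`. Put `x`
into `A_j` (resp. `B_j`) when `σ x = (ℓ j, 0)` (resp. `(ℓ j, 1)`).

On a subcube, `σ` attains `σ` of a base vertex plus every subset sum of the lifted labels
`(ℓ i, 1)` of its free coordinates. Over `𝔽₂` these subset sums fill the span, and
lifted points span `𝔽₂^k × 𝔽₂` as soon as they do not lie on one affine hyperplane, which
is the case for more than `2^(k-1)` of them.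
-/

open Finset

section Span

variable {K V : Type*} [Field K] [Fintype K] [DecidableEq K] [AddCommGroup V] [Module K V]
  [Fintype V]

theorem LinearMap.card_fiber_mul_card_of_ne_zero {φ : V →ₗ[K] K} (hφ : φ ≠ 0) (c : K) :
    #{v | φ v = c} * Fintype.card K = Fintype.card V := by
  obtain ⟨v₀, hv₀⟩ : ∃ v₀, φ v₀ = 1 := by
    obtain ⟨v, hv⟩ : ∃ v, φ v ≠ 0 := by
      by_contra! h
      exact hφ (LinearMap.ext h)
    exact ⟨(φ v)⁻¹ • v, by simp [hv]⟩
  have hfiber (d : K) : #{v | φ v = d} = #{v | φ v = c} :=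
    card_nbij' (· + (c - d) • v₀) (· - (c - d) • v₀) (fun v hv => by simp_all)
      (fun v hv => by simp_all) (fun v _ => by simp) (fun v _ => by simp)
  calc #{v | φ v = c} * Fintype.card K
      = ∑ d : K, #{v | φ v = d} := by simp [hfiber, mul_comm]
    _ = Fintype.card V := (card_eq_sum_card_fiberwise (by simp)).symm

theorem span_image_prodMk_one_eq_top {T : Finset V}
    (hT : Fintype.card V < #T * Fintype.card K) :
    Submodule.span K ((fun v => (v, (1 : K))) '' (T : Set V)) = ⊤ := by
  by_contra hne
  obtain ⟨f, hf, hker⟩ := Submodule.exists_le_ker_of_lt_top _ (lt_top_iff_ne_top.2 hne)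
  set φ := f.comp (LinearMap.inl K V K)
  set c := f (0, 1)
  have hf_apply (v : V) (a : K) : f (v, a) = φ v + a * c := by
    have : (v, a) = LinearMap.inl K V K v + a • (0, 1) := by ext <;> simp
    rw [this, map_add, map_smul, smul_eq_mul]
    rfl
  have hT_fiber : ∀ v ∈ T, φ v = -c := fun v hv => by
    have := hker (Submodule.subset_span ⟨v, hv, rfl⟩)
    rw [LinearMap.mem_ker, hf_apply, one_mul] at this
    exact eq_neg_of_add_eq_zero_left this
  by_cases hφ : φ = 0
  · obtain ⟨v, hv⟩ : T.Nonempty := by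
      rw [← card_pos]
      by_contra! h
      simp_all
    have hc : c = 0 := by simpa [hφ] using hT_fiber v hv
    exact hf (LinearMap.ext fun ⟨v, a⟩ => by simp [hf_apply, hφ, hc])
  · have hsub : T ⊆ ({v | φ v = -c} : Finset V) := fun v hv => by simpa using hT_fiber v hv
    have := Nat.mul_le_mul_right (Fintype.card K) (card_le_card hsub)
    rw [LinearMap.card_fiber_mul_card_of_ne_zero hφ] at this
    omega

end Span

theorem ZMod.exists_subset_sum_eq_of_mem_span {ι M : Type*} [AddCommGroup M]
    [Module (ZMod 2) M] (w : ι → M) {s : Set ι} {x : M}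
    (hx : x ∈ Submodule.span (ZMod 2) (w '' s)) :
    ∃ t : Finset ι, ↑t ⊆ s ∧ ∑ i ∈ t, w i = x := by
  obtain ⟨l, hl, rfl⟩ := (Finsupp.mem_span_image_iff_linearCombination _).1 hx
  refine ⟨l.support, hl, ?_⟩
  rw [Finsupp.linearCombination_apply, Finsupp.sum]
  refine sum_congr rfl fun i hi => ?_
  have : l i = 1 := by
    have h := Finsupp.mem_support_iff.1 hi
    revert h
    generalize l i = a
    revert a
    decide
  simp [this]

section LabelSum

variable {ι M : Type*} [Fintype ι]

def labelSum [AddCommMonoid M] (w : ι → M) (x : ι → Bool) : M :=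
  ∑ i with x i = true, w i

theorem exists_labelSum_eq_of_span_eq_top [DecidableEq ι] [AddCommGroup M] [Module (ZMod 2) M]
    (w : ι → M) {F : Finset ι} (hspan : Submodule.span (ZMod 2) (w '' ↑Fᶜ) = ⊤)
    (b : ι → Bool) (y : M) : ∃ x : ι → Bool, (∀ i ∈ F, x i = b i) ∧ labelSum w x = y := by
  set c := ∑ i ∈ F with b i = true, w i
  obtain ⟨t, htF, ht⟩ :=
    ZMod.exists_subset_sum_eq_of_mem_span w (hspan ▸ Submodule.mem_top : y - c ∈ _)
  have hdisj : Disjoint {i ∈ F | b i = true} t :=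
    disjoint_left.2 fun i hi hit => by simpa [(mem_filter.1 hi).1] using htF hit
  refine ⟨fun i => if i ∈ F then b i else decide (i ∈ t), fun i hi => if_pos hi, ?_⟩
  have hsupp : ({i | (if i ∈ F then b i else decide (i ∈ t)) = true} : Finset ι)
      = {i ∈ F | b i = true} ∪ t := by
    ext i
    by_cases hi : i ∈ F
    · have : i ∉ t := fun hit => by simpa [hi] using htF hit
      simp [hi, this]
    · simp [hi]
  rw [labelSum, hsupp, sum_union hdisj, ht, add_sub_cancel]

theorem labelSum_snd_eq_parity {V : Type*} [AddCommMonoid V] {n : ℕ} (ℓ : Fin n → V)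
    (x : Fin n → Bool) : (labelSum (fun i => (ℓ i, (1 : ZMod 2))) x).2 = parity x := by
  simp [labelSum, Prod.snd_sum, parity]

end LabelSum

theorem natCast_parity_eq_iff {n : ℕ} (x : Fin n → Bool) {c : ℕ} (hc : c < 2) :
    ((parity x : ℕ) : ZMod 2) = c ↔ parity x = c := by
  rw [ZMod.natCast_eq_natCast_iff', parity, Nat.mod_mod, Nat.mod_eq_of_lt hc]

section Fibers

variable {α β γ ι : Type*} (g : α → β × γ) {e : ι → β} (c : γ)

theorem inter_setOf_eq_mk_eq_empty (he : Function.Injective e) {i j : ι} (hij : i ≠ j) :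
    {x | g x = (e i, c)} ∩ {x | g x = (e j, c)} = ∅ :=
  Set.eq_empty_of_forall_notMem fun _ ⟨hi, hj⟩ =>
    hij (he (congrArg Prod.fst (hi.symm.trans hj)))

theorem iUnion_setOf_eq_mk (he : Function.Surjective e) :
    ⋃ j, {x | g x = (e j, c)} = {x | (g x).2 = c} := by
  ext x
  simp only [Set.mem_iUnion, Set.mem_ofPred_eq]
  constructor
  · rintro ⟨j, hj⟩
    rw [hj]
  · intro hx
    obtain ⟨j, hj⟩ := he (g x).1
    exact ⟨j, Prod.ext hj.symm hx⟩

end Fibers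

theorem stmt_11_general (k : ℕ) :
    ∃ (A B : Fin (2 ^ k) → Set (Fin (2 ^ k) → Bool)),
      (∀ i j, i ≠ j → A i ∩ A j = ∅) ∧
      (⋃ j, A j) = {x | parity x = 0} ∧
      (∀ i j, i ≠ j → B i ∩ B j = ∅) ∧
      (⋃ j, B j) = {x | parity x = 1} ∧
      ∀ S, IsSubcube (2 ^ k) (2 ^ (k - 1) + 1) S →
        ∀ j, (S ∩ A j).Nonempty ∧ (S ∩ B j).Nonempty := by
  obtain ⟨e⟩ : Nonempty (Fin (2 ^ k) ≃ (Fin k → ZMod 2)) :=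
    ⟨(Fintype.equivFinOfCardEq (by simp)).symm⟩
  set w : Fin (2 ^ k) → (Fin k → ZMod 2) × ZMod 2 := fun i => (e i, 1)
  set σ := labelSum w
  have hσ_parity (c : ℕ) (hc : c < 2) : {x | (σ x).2 = c} = {x | parity x = c} := by
    ext x
    change (labelSum (fun i => (e i, (1 : ZMod 2))) x).2 = c ↔ parity x = c
    rw [labelSum_snd_eq_parity, natCast_parity_eq_iff x hc]
  refine ⟨fun j => {x | σ x = (e j, 0)}, fun j => {x | σ x = (e j, 1)},
    fun i j => inter_setOf_eq_mk_eq_empty σ 0 e.injective,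
    by simpa using (iUnion_setOf_eq_mk σ 0 e.surjective).trans (hσ_parity 0 two_pos),
    fun i j => inter_setOf_eq_mk_eq_empty σ 1 e.injective,
    by simpa using (iUnion_setOf_eq_mk σ 1 e.surjective).trans (hσ_parity 1 one_lt_two), ?_⟩
  rintro S ⟨F, b, hF, rfl⟩ j
  have hspan : Submodule.span (ZMod 2) (w '' ↑Fᶜ) = ⊤ := by
    rw [show w '' ↑Fᶜ = (fun v => (v, 1)) '' ↑(Fᶜ.image e) by rw [coe_image, Set.image_image]]
    apply span_image_prodMk_one_eq_top
    have : 0 < 2 ^ k := Nat.two_pow_pos k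
    have : 2 ^ k ≤ 2 * 2 ^ (k - 1) := by
      rw [← pow_succ']
      exact Nat.pow_le_pow_right two_pos (by omega)
    simp only [Fintype.card_pi, ZMod.card, prod_const, card_univ, Fintype.card_fin,
      card_image_of_injective _ e.injective, card_compl, hF]
    omega
  obtain ⟨x, hxS, hxA⟩ := exists_labelSum_eq_of_span_eq_top w hspan b (e j, 0)
  obtain ⟨y, hyS, hyB⟩ := exists_labelSum_eq_of_span_eq_top w hspan b (e j, 1)
  exact ⟨⟨x, hxS, hxA⟩, ⟨y, hyS, hyB⟩⟩

theorem stmt_11 (k : ℕ) (hk : 1 ≤ k) :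
    ∃ (A B : Fin (2 ^ k) → Set (Fin (2 ^ k) → Bool)),
      (∀ i j, i ≠ j → A i ∩ A j = ∅) ∧
      (⋃ j, A j) = {x | parity x = 0} ∧
      (∀ i j, i ≠ j → B i ∩ B j = ∅) ∧
      (⋃ j, B j) = {x | parity x = 1} ∧
      ∀ S, IsSubcube (2 ^ k) (2 ^ (k - 1) + 1) S →
        ∀ j, (S ∩ A j).Nonempty ∧ (S ∩ B j).Nonempty :=
  stmt_11_general k
end

section
/- For all n ≥ 1 and c ≥ 2, the set of even-parity vertices of Q_{c^n} can be partitioned into (2^{c-1})^n subsets, and likewise the odd-parity vertices into (2^{c-1})^n subsets, such that every subcube of Q_{c^n} of dimension c^n - c^{n-1} + 1 contains at least one vertex from each subset of each partition. -/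
/-!
Index the coordinates of `Q_{c^n}` by the words `a : Fin n → Fin c`. Over `ZMod 2`, record for a
vertex `x` the parity of `x` on each set of words `{a | a j = u}` with `u ≠ 0`, together with the
parity of `x` itself; the classes are the fibres of this linear map. A nonzero functional on the
target takes the value `ε + ∑ j, h j (a j)` on the column of the word `a`, and such a function
is nonzero on at least `c ^ (n - 1)` words if it is nonzero at all. Hence fixing fewer than
`c ^ (n - 1)` coordinates, which is what a subcube of codimension `c ^ (n - 1) - 1` does, leaves
the map onto: every class meets every such subcube.
-/

open Finset

theorem Fin.card_filter_univ_succ_eq_sum {α : Type*} [Fintype α] {n : ℕ}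
    (P : (Fin (n + 1) → α) → Prop) [DecidablePred P] :
    #{a | P a} = ∑ b, #{a : Fin n → α | P (Fin.cons b a)} := by
  simp only [card_filter]
  rw [← (Fin.consEquiv fun _ => α).sum_comp, Fintype.sum_prod_type]
  rfl

theorem pow_pred_le_card_add_sum_ne_zero {α G : Type*} [Fintype α] [AddCommGroup G]
    [DecidableEq G] (n : ℕ) (ε : G) (h : Fin n → α → G)
    (hne : ∃ a : Fin n → α, ε + ∑ j, h j (a j) ≠ 0) :
    Fintype.card α ^ (n - 1) ≤ #{a : Fin n → α | ε + ∑ j, h j (a j) ≠ 0} := by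
  induction n generalizing ε with
  | zero =>
    obtain ⟨a, ha⟩ := hne
    exact card_pos.mpr ⟨a, mem_filter.mpr ⟨mem_univ a, ha⟩⟩
  | succ n ih =>
    have hcons : ∀ b (a : Fin n → α), ε + ∑ j, h j (Fin.cons b a j : α)
        = (ε + h 0 b) + ∑ j, h j.succ (a j) := by
      intro b a
      simp [Fin.sum_univ_succ, add_assoc]
    simp only [Fin.card_filter_univ_succ_eq_sum, hcons, Nat.add_sub_cancel]
    by_cases hslices : ∀ b, ∃ a : Fin n → α, (ε + h 0 b) + ∑ j, h j.succ (a j) ≠ 0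
    · obtain ⟨a, -⟩ := hne
      have hα : 0 < Fintype.card α := Fintype.card_pos_iff.mpr ⟨a 0⟩
      calc Fintype.card α ^ n ≤ Fintype.card α ^ (n - 1 + 1) :=
            Nat.pow_le_pow_right hα (by omega)
        _ = ∑ _b : α, Fintype.card α ^ (n - 1) := by simp [pow_succ, mul_comm]
        _ ≤ _ := sum_le_sum fun b _ => ih _ _ (hslices b)
    · -- one slice vanishes identically, so the tail sum is constant and the slice through a
      -- nonzero point is nonzero everywhere
      push Not at hslices
      obtain ⟨b₀, hb₀⟩ := hslices
      obtain ⟨a, ha⟩ := hne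
      have hslice : ∀ a' : Fin n → α, (ε + h 0 (a 0)) + ∑ j, h j.succ (a' j) ≠ 0 := by
        intro a'
        rw [add_left_cancel ((hb₀ a').trans (hb₀ (Fin.tail a)).symm), ← hcons,
          Fin.cons_self_tail]
        exact ha
      calc Fintype.card α ^ n
          = #{a' : Fin n → α | (ε + h 0 (a 0)) + ∑ j, h j.succ (a' j) ≠ 0} := by
            simp [hslice]
        _ ≤ _ := single_le_sum
            (f := fun b => #{a' : Fin n → α | (ε + h 0 b) + ∑ j, h j.succ (a' j) ≠ 0})
            (fun _ _ => Nat.zero_le _) (mem_univ _)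

theorem exists_eqOn_sum_smul_eq {K V ι : Type*} [Field K] [DecidableEq K] [AddCommGroup V]
    [Module K V] [Fintype ι] [DecidableEq ι] (v : ι → V) {k : ℕ}
    (hv : ∀ φ : Module.Dual K V, φ ≠ 0 → k ≤ #{i | φ (v i) ≠ 0})
    {F : Finset ι} (hF : #F < k) (b : ι → K) (t : V) :
    ∃ x : ι → K, (∀ i ∈ F, x i = b i) ∧ ∑ i, x i • v i = t := by
  set L := Fintype.linearCombination K v
  set W : Submodule K (ι → K) := Submodule.pi (F : Set ι) fun _ => ⊥
  have hW : W.map L = ⊤ := by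
    by_contra hne
    obtain ⟨φ, hφ, hker⟩ := (W.map L).exists_le_ker_of_lt_top (lt_top_iff_ne_top.mpr hne)
    have hsupp : ({i | φ (v i) ≠ 0} : Finset ι) ⊆ F := by
      intro i hi
      by_contra hiF
      refine (mem_filter.mp hi).2 (LinearMap.mem_ker.mp (hker ⟨Pi.single i 1, ?_, ?_⟩))
      · intro i' hi'
        exact Pi.single_eq_of_ne (ne_of_mem_of_not_mem hi' hiF) 1
      · simp [L, Fintype.linearCombination_apply_single]
    exact (hF.trans_le (hv φ hφ)).not_ge (card_le_card hsupp)
  obtain ⟨w, hwW, hw⟩ : t - L b ∈ W.map L := hW ▸ Submodule.mem_top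
  refine ⟨b + w, fun i hi => ?_, ?_⟩
  · simpa [W, Submodule.mem_pi] using hwW i hi
  · rw [← Fintype.linearCombination_apply, map_add, hw, add_sub_cancel]

-- The letter `0` gets no row: this is what leaves `(2 ^ (c - 1)) ^ n` classes per parity.
def letterColumn {K : Type*} [Zero K] [One K] {n m : ℕ} (a : Fin n → Fin (m + 1)) :
    (Fin n → Fin m → K) × K :=
  (fun j u => if a j = u.succ then 1 else 0, 1)

theorem pow_pred_le_card_letterColumn {K : Type*} [Field K] [DecidableEq K] {n m : ℕ}
    (φ : Module.Dual K ((Fin n → Fin m → K) × K)) (hφ : φ ≠ 0) :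
    (m + 1) ^ (n - 1) ≤ #{a : Fin n → Fin (m + 1) | φ (letterColumn a) ≠ 0} := by
  set h : Fin n → Fin (m + 1) → K :=
    fun j b => φ (Pi.single j fun u => if b = u.succ then 1 else 0, 0)
  have hcol : ∀ a, φ (letterColumn a) = φ (0, 1) + ∑ j, h j (a j) := by
    intro a
    have : letterColumn a = ((0, 1) : (Fin n → Fin m → K) × K) +
        ∑ j, (Pi.single j fun u => if a j = u.succ then 1 else 0, 0) := by
      ext j u <;> simp [letterColumn, Prod.fst_sum, Prod.snd_sum, Finset.sum_apply, Pi.single_apply]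
    rw [this, map_add, map_sum]
  have hne : ∃ a : Fin n → Fin (m + 1), φ (0, 1) + ∑ j, h j (a j) ≠ 0 := by
    by_contra! hall
    have h_zero : ∀ j, h j 0 = 0 := by
      simp [h, eq_comm (a := (0 : Fin (m + 1))), ← Pi.zero_def, Prod.mk_zero_zero]
    have h_succ : ∀ j u, h j u.succ = φ (Pi.single j (Pi.single u 1), 0) := by
      intro j u
      simp only [h, Fin.succ_inj]
      congr
      ext u'
      simp [Pi.single_apply, eq_comm]
    have hε : φ (0, 1) = 0 := by simpa [h_zero] using hall 0
    refine hφ ?_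
    ext j u
    · have := hall (Pi.single j u.succ)
      rwa [hε, zero_add, Fintype.sum_eq_single j (fun i hi => by simp [hi, h_zero]),
        Pi.single_eq_same, h_succ] at this
    · exact hε
  simpa [hcol] using pow_pred_le_card_add_sum_ne_zero n _ h hne

def syndrome {ι : Type*} [Fintype ι] {n m : ℕ} (e : ι → Fin n → Fin (m + 1))
    (x : ι → Bool) : (Fin n → Fin m → ZMod 2) × ZMod 2 :=
  ∑ i, (if x i then 1 else 0 : ZMod 2) • letterColumn (e i)

theorem parity_eq_val_syndrome_snd {N n m : ℕ} (e : Fin N → Fin n → Fin (m + 1))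
    (x : Fin N → Bool) : parity x = (syndrome e x).2.val := by
  simp [syndrome, parity, letterColumn, Prod.snd_sum, apply_ite Prod.snd, ZMod.val_natCast]

theorem exists_eqOn_syndrome_eq {ι : Type*} [Fintype ι] [DecidableEq ι] {n m : ℕ}
    (e : ι ≃ (Fin n → Fin (m + 1))) {F : Finset ι} (hF : #F < (m + 1) ^ (n - 1))
    (b : ι → Bool) (t : (Fin n → Fin m → ZMod 2) × ZMod 2) :
    ∃ x : ι → Bool, (∀ i ∈ F, x i = b i) ∧ syndrome e x = t := by
  obtain ⟨y, hyF, hy⟩ := exists_eqOn_sum_smul_eq (fun i => letterColumn (e i))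
    (fun φ hφ => (pow_pred_le_card_letterColumn φ hφ).trans_eq (card_equiv e.symm (by simp)))
    hF (fun i => if b i then 1 else 0) t
  have hbool : ∀ z : ZMod 2, (if decide (z = 1) then 1 else 0) = z := by decide
  refine ⟨fun i => decide (y i = 1), fun i hi => ?_, ?_⟩
  · show decide (y i = 1) = b i
    rw [hyF i hi]
    cases b i <;> decide
  · rw [← hy, syndrome]
    exact sum_congr rfl fun i _ => by rw [hbool]

theorem stmt_12_general (n c : ℕ) (hc : 2 ≤ c) :
    ∃ (A B : Fin ((2 ^ (c - 1)) ^ n) → Set (Fin (c ^ n) → Bool)),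
      (∀ i j, i ≠ j → A i ∩ A j = ∅) ∧
      (⋃ j, A j) = {x | parity x = 0} ∧
      (∀ i j, i ≠ j → B i ∩ B j = ∅) ∧
      (⋃ j, B j) = {x | parity x = 1} ∧
      ∀ S, IsSubcube (c ^ n) (c ^ n - c ^ (n - 1) + 1) S →
        ∀ j, (S ∩ A j).Nonempty ∧ (S ∩ B j).Nonempty := by
  obtain ⟨m, rfl⟩ : ∃ m, c = m + 1 := ⟨c - 1, by omega⟩
  let e : Fin ((m + 1) ^ n) ≃ (Fin n → Fin (m + 1)) := finFunctionFinEquiv.symm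
  let enc : (Fin n → Fin m → ZMod 2) ≃ Fin ((2 ^ (m + 1 - 1)) ^ n) :=
    Fintype.equivFinOfCardEq (by simp)
  let part (p : ℕ) (j : Fin ((2 ^ (m + 1 - 1)) ^ n)) : Set (Fin ((m + 1) ^ n) → Bool) :=
    {x | parity x = p ∧ enc (syndrome e x).1 = j}
  have hdisj (p : ℕ) (i j) (hij : i ≠ j) : part p i ∩ part p j = ∅ :=
    Set.eq_empty_of_forall_notMem fun x hx => hij (hx.1.2.symm.trans hx.2.2)
  have hcover (p : ℕ) : ⋃ j, part p j = {x | parity x = p} := by ext; simp [part]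
  refine ⟨part 0, part 1, hdisj 0, hcover 0, hdisj 1, hcover 1, ?_⟩
  rintro S ⟨F, b, hF, rfl⟩ j
  have hF' : #F < (m + 1) ^ (n - 1) := by
    have := Nat.pow_le_pow_right (by omega : 0 < m + 1) (n.sub_le 1)
    have := Nat.pow_pos (n := n - 1) (by omega : 0 < m + 1)
    omega
  have hpart (p : ZMod 2) : ({x | ∀ i ∈ F, x i = b i} ∩ part p.val j).Nonempty := by
    obtain ⟨x, hxF, hx⟩ := exists_eqOn_syndrome_eq e hF' b (enc.symm j, p)
    exact ⟨x, hxF, by rw [parity_eq_val_syndrome_snd e, hx], by simp [hx]⟩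
  exact ⟨hpart 0, hpart 1⟩

theorem stmt_12 (n c : ℕ) (hn : 1 ≤ n) (hc : 2 ≤ c) :
    ∃ (A B : Fin ((2 ^ (c - 1)) ^ n) → Set (Fin (c ^ n) → Bool)),
      (∀ i j, i ≠ j → A i ∩ A j = ∅) ∧
      (⋃ j, A j) = {x | parity x = 0} ∧
      (∀ i j, i ≠ j → B i ∩ B j = ∅) ∧
      (⋃ j, B j) = {x | parity x = 1} ∧
      ∀ S, IsSubcube (c ^ n) (c ^ n - c ^ (n - 1) + 1) S →
        ∀ j, (S ∩ A j).Nonempty ∧ (S ∩ B j).Nonempty :=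
  stmt_12_general n c hc
end

section
/- For every d ≥ 0, there exist 4^{d+1} pairwise disjoint matchings of Q_{3^{d+1}}, of equal cardinality, which partition the edge set of Q_{3^{d+1}}, such that every (3^d + 1)-dimensional subcube of Q_{3^{d+1}} contains an edge of each matching. -/
/-!
Index the `3^m` coordinates of `Q_{3^m}` by ternary words `τ ∈ {0,1,2}^m` and read a vertex as
`x : Word m → 𝔽₂`. For a level `ℓ < m` and a letter `t`, the layer sum `∑_{τ ℓ = t} x τ` does not
change when coordinate `σ` is flipped, unless `σ ℓ = t`. So the edge at `x` in direction `σ` can be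
coloured, level by level, by the zero-sum vector of `𝔽₂³` that agrees with
`t ↦ layerSum ℓ t x + [t = σ ℓ + 1]` away from `σ ℓ`. There are `4^m` colours, every colour class
is a matching, and translating `x` by a vector supported on the neighbours of `σ` moves one colour
class bijectively onto another.

A subcube whose set `F` of free coordinates satisfies `3^m < 3 |F|` contains an edge of every
colour. By induction on `m`, split `F` into three slabs according to the first letter: recurse into
a slab with more than `3^(m-1)` free coordinates, and fix the parity of each other slab with one of
its free coordinates. An empty slab has its parity forced, which dictates the first letter of the
direction; if the slab of that letter is too small to recurse into, the remaining slab has more than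
`2 * 3^(m-1)` free coordinates, and that is enough to prescribe all of its layer sums.
-/

open Finset

namespace SubcubeMatching

section Cube

variable {n : ℕ}

def flipAt (x : Fin n → Bool) (i : Fin n) : Fin n → Bool := Function.update x i (!x i)

@[simp] lemma flipAt_self (x : Fin n → Bool) (i : Fin n) : flipAt x i i = !x i := by
  simp [flipAt]

lemma flipAt_of_ne (x : Fin n → Bool) {i j : Fin n} (h : j ≠ i) : flipAt x i j = x j := by
  simp [flipAt, h]

@[simp] lemma flipAt_flipAt (x : Fin n → Bool) (i : Fin n) : flipAt (flipAt x i) i = x := by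
  funext j
  rcases eq_or_ne j i with rfl | h <;> simp [flipAt_of_ne, *]

lemma flipAt_ne (x : Fin n → Bool) (i : Fin n) : flipAt x i ≠ x :=
  fun h => by simpa using congrFun h i

lemma flipAt_injective (x : Fin n → Bool) : Function.Injective (flipAt x) := by
  intro i j h
  by_contra hij
  simpa [flipAt_of_ne x hij] using congrFun h i

lemma qAdj_flipAt (x : Fin n → Bool) (i : Fin n) : QAdj x (flipAt x i) := by
  rw [QAdj, card_eq_one]
  refine ⟨i, ?_⟩
  ext j
  rcases eq_or_ne j i with rfl | h <;> simp [flipAt_of_ne, *]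

lemma exists_eq_flipAt {x y : Fin n → Bool} (h : QAdj x y) : ∃ i, y = flipAt x i := by
  obtain ⟨i, hi⟩ := card_eq_one.mp h
  refine ⟨i, funext fun j => ?_⟩
  have hj := congrArg (j ∈ ·) hi
  rcases eq_or_ne j i with rfl | h
  · simpa [Bool.eq_not_iff, eq_comm] using hj
  · simp [h] at hj
    simp [flipAt_of_ne _ h, hj]

lemma pair_flipAt_eq_of_mem {x v : Fin n → Bool} {i : Fin n}
    (hv : v ∈ ({x, flipAt x i} : Set _)) : ({x, flipAt x i} : Set _) = {v, flipAt v i} := by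
  rcases hv with rfl | rfl
  · rfl
  · simp [Set.pair_comm]

lemma eq_of_pair_flipAt_eq {x y : Fin n → Bool} {i j : Fin n}
    (h : ({x, flipAt x i} : Set _) = {y, flipAt y j}) : j = i ∧ (y = x ∨ y = flipAt x i) := by
  have hy : y ∈ ({x, flipAt x i} : Set _) := h ▸ Or.inl rfl
  rw [pair_flipAt_eq_of_mem hy] at h
  have hj : flipAt y j ∈ ({y, flipAt y i} : Set _) := h ▸ Or.inr rfl
  rcases hj with hj | hj
  · exact absurd hj (flipAt_ne y j)
  · exact ⟨flipAt_injective y hj, hy⟩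

variable {C : Type*} (χ : (Fin n → Bool) → Fin n → C)

def colorClass (c : C) : Set (Set (Fin n → Bool)) :=
  {e | ∃ x i, e = {x, flipAt x i} ∧ χ x i = c}

variable {χ}

lemma apply_eq_of_pair_flipAt_eq (hχ : ∀ x i, χ (flipAt x i) i = χ x i)
    {x y : Fin n → Bool} {i j : Fin n} (h : ({x, flipAt x i} : Set _) = {y, flipAt y j}) :
    χ y j = χ x i := by
  obtain ⟨rfl, rfl | rfl⟩ := eq_of_pair_flipAt_eq h
  · rfl
  · exact hχ x j

lemma isMatching_colorClass (hχ : ∀ x i, χ (flipAt x i) i = χ x i)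
    (hproper : ∀ x i j, χ x i = χ x j → i = j) (c : C) : IsMatching n (colorClass χ c) := by
  refine ⟨fun e ⟨x, i, he, _⟩ => ⟨x, flipAt x i, qAdj_flipAt x i, he⟩, ?_⟩
  rintro _ ⟨x, i, rfl, hxi⟩ _ ⟨y, j, rfl, hyj⟩ hne
  refine Set.eq_empty_of_forall_notMem fun v ⟨hvx, hvy⟩ => hne ?_
  have hx := pair_flipAt_eq_of_mem hvx
  have hy := pair_flipAt_eq_of_mem hvy
  obtain rfl : i = j := hproper v i j <| by
    rw [apply_eq_of_pair_flipAt_eq hχ hx, apply_eq_of_pair_flipAt_eq hχ hy, hxi, hyj]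
  rw [hx, hy]

lemma colorClass_disjoint (hχ : ∀ x i, χ (flipAt x i) i = χ x i) {c c' : C} (h : c ≠ c') :
    colorClass χ c ∩ colorClass χ c' = ∅ := by
  refine Set.eq_empty_of_forall_notMem ?_
  rintro _ ⟨⟨x, i, rfl, rfl⟩, ⟨y, j, hxy, rfl⟩⟩
  exact h (apply_eq_of_pair_flipAt_eq hχ hxy).symm

lemma iUnion_colorClass : ⋃ c, colorClass χ c = {e | QEdge n e} := by
  ext e
  simp only [Set.mem_iUnion, Set.mem_ofPred_eq]
  constructor
  · rintro ⟨c, x, i, rfl, -⟩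
    exact ⟨x, flipAt x i, qAdj_flipAt x i, rfl⟩
  · rintro ⟨x, y, hxy, rfl⟩
    obtain ⟨i, rfl⟩ := exists_eq_flipAt hxy
    exact ⟨χ x i, x, i, rfl, rfl⟩

lemma ncard_colorClass (hχ : ∀ x i, χ (flipAt x i) i = χ x i) (c : C) :
    {p : (Fin n → Bool) × Fin n | p.1 p.2 = false ∧ χ p.1 p.2 = c}.ncard =
      (colorClass χ c).ncard := by
  refine Set.ncard_congr (fun p _ => {p.1, flipAt p.1 p.2}) ?_ ?_ ?_
  · rintro ⟨x, i⟩ ⟨-, hc⟩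
    exact ⟨x, i, rfl, hc⟩
  · rintro ⟨x, i⟩ ⟨y, j⟩ ⟨hx, -⟩ ⟨hy, -⟩ h
    simp only at hx hy h
    obtain ⟨rfl, rfl | rfl⟩ := eq_of_pair_flipAt_eq h
    · rfl
    · simp [hx] at hy
  · rintro _ ⟨x, i, rfl, rfl⟩
    cases hxi : x i
    · exact ⟨(x, i), ⟨hxi, rfl⟩, rfl⟩
    · exact ⟨(flipAt x i, i), ⟨by simp [hxi], hχ x i⟩, (pair_flipAt_eq_of_mem (Or.inr rfl)).symm⟩

lemma ncard_colorClass_eq (hχ : ∀ x i, χ (flipAt x i) i = χ x i)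
    (hT : ∀ i (c c' : C), ∃ T : (Fin n → Bool) ≃ (Fin n → Bool),
      ∀ x, T x i = x i ∧ (χ (T x) i = c' ↔ χ x i = c)) (c c' : C) :
    (colorClass χ c).ncard = (colorClass χ c').ncard := by
  rw [← ncard_colorClass hχ, ← ncard_colorClass hχ]
  choose T hTx using hT
  refine Set.ncard_congr (fun p _ => (T p.2 c c' p.1, p.2)) ?_ ?_ ?_
  · rintro ⟨x, i⟩ ⟨hx, hc⟩
    exact ⟨(hTx i c c' x).1.trans hx, (hTx i c c' x).2.mpr hc⟩
  · rintro ⟨x, i⟩ ⟨y, j⟩ - - h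
    simp only [Prod.mk.injEq] at h
    obtain ⟨h, rfl⟩ := h
    simpa using (T i c c').injective h
  · rintro ⟨y, i⟩ ⟨hy, hc⟩
    refine ⟨((T i c c').symm y, i), ?_, by simp⟩
    have := hTx i c c' ((T i c c').symm y)
    simp only [Equiv.apply_symm_apply] at this
    exact ⟨this.1.symm.trans hy, this.2.mp hc⟩

lemma pair_flipAt_subset {F : Finset (Fin n)} {b x : Fin n → Bool} (hx : ∀ j ∈ F, x j = b j)
    {i : Fin n} (hi : i ∉ F) : ({x, flipAt x i} : Set _) ⊆ {y | ∀ j ∈ F, y j = b j} := by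
  rintro _ (rfl | rfl) j hj
  · exact hx j hj
  · rw [flipAt_of_ne x (ne_of_mem_of_not_mem hj hi)]
    exact hx j hj

end Cube

abbrev Word (m : ℕ) := Fin m → Fin 3

def glue {α : Type*} {m : ℕ} (f : Fin 3 → Word m → α) : Word (m + 1) → α :=
  fun τ => f (τ 0) (Fin.tail τ)

@[simp] lemma glue_cons {α : Type*} {m : ℕ} (f : Fin 3 → Word m → α) (u : Fin 3) (τ : Word m) :
    glue f (Fin.cons u τ) = f u τ := by
  simp [glue]

section Layers

variable {M : Type*} [AddCommMonoid M] {m : ℕ}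

def layerSum (ℓ : Fin m) (t : Fin 3) : (Word m → M) →+ M :=
  ∑ τ with τ ℓ = t, Pi.evalAddMonoidHom (fun _ => M) τ

lemma layerSum_apply (ℓ : Fin m) (t : Fin 3) (x : Word m → M) :
    layerSum ℓ t x = ∑ τ with τ ℓ = t, x τ := by
  simp [layerSum]

lemma sum_layerSum (ℓ : Fin m) (x : Word m → M) : ∑ t, layerSum ℓ t x = ∑ τ, x τ := by
  simp only [layerSum_apply]
  exact Finset.sum_fiberwise _ _ _

lemma layerSum_single (ℓ : Fin m) (t : Fin 3) (τ₀ : Word m) (a : M) :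
    layerSum ℓ t (Pi.single τ₀ a) = if τ₀ ℓ = t then a else 0 := by
  rw [layerSum_apply, Finset.sum_pi_single']
  simp

lemma sum_word_succ (f : Word (m + 1) → M) :
    ∑ τ, f τ = ∑ u, ∑ τ, f (Fin.cons u τ) := by
  rw [← Fintype.sum_prod_type']
  exact (Fintype.sum_equiv (Fin.consEquiv fun _ => Fin 3) _ _ fun _ => rfl).symm

lemma layerSum_zero_glue (f : Fin 3 → Word m → M) (t : Fin 3) :
    layerSum 0 t (glue f) = ∑ τ, f t τ := by
  rw [layerSum_apply, Finset.sum_filter, sum_word_succ]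
  simp

lemma layerSum_succ_glue (f : Fin 3 → Word m → M) (ℓ : Fin m) (t : Fin 3) :
    layerSum ℓ.succ t (glue f) = ∑ u, layerSum ℓ t (f u) := by
  simp only [layerSum_apply, Finset.sum_filter]
  rw [sum_word_succ]
  simp

lemma sum_layerSum_update (y : Fin 3 → Word m → M) (u : Fin 3) (x : Word m → M)
    (ℓ : Fin m) (t : Fin 3) :
    ∑ u', layerSum ℓ t (Function.update y u x u') =
      layerSum ℓ t x + ∑ u' ∈ univ \ {u}, layerSum ℓ t (y u') := by
  rw [← Finset.sum_update_of_mem (mem_univ u)]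
  congr! 1 with u'
  rcases eq_or_ne u' u with rfl | h <;> simp [*]

lemma exists_vanishing_at_layerSum_eq (σ : Word m) (w : Fin m → Fin 3 → M) :
    ∃ z : Word m → M, z σ = 0 ∧ ∀ ℓ, ∀ t ≠ σ ℓ, layerSum ℓ t z = w ℓ t := by
  refine ⟨∑ ℓ, ∑ t ∈ univ.erase (σ ℓ), Pi.single (Function.update σ ℓ t) (w ℓ t), ?_,
    fun ℓ₀ t₀ ht₀ => ?_⟩
  · simp [Finset.sum_apply, Pi.single_apply]
  · simp only [map_sum, layerSum_single]
    rw [Finset.sum_eq_single ℓ₀]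
    · simp [ht₀]
    · intro ℓ _ hℓ
      simp [Function.update_of_ne (Ne.symm hℓ), ht₀.symm]
    · simp

end Layers

section Slabs

variable {m : ℕ}

def slab (u : Fin 3) (E : Finset (Word (m + 1))) : Finset (Word m) :=
  {τ | Fin.cons u τ ∈ E}

@[simp] lemma mem_slab {u : Fin 3} {E : Finset (Word (m + 1))} {τ : Word m} :
    τ ∈ slab u E ↔ Fin.cons u τ ∈ E := by
  simp [slab]

lemma card_eq_sum_card_slab (E : Finset (Word (m + 1))) : #E = ∑ u, #(slab u E) := by
  simp only [Finset.card_eq_sum_ones, Finset.sum_filter, slab]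
  rw [← sum_word_succ fun τ => if τ ∈ E then 1 else 0, ← Finset.sum_filter]
  simp

lemma card_slab_le (u : Fin 3) (E : Finset (Word (m + 1))) : #(slab u E) ≤ 3 ^ m := by
  simpa using Finset.card_le_univ (slab u E)

lemma exists_lt_three_mul_card_slab {E : Finset (Word (m + 1))} {B : ℕ} (h : B < #E) :
    ∃ u, B < 3 * #(slab u E) := by
  by_contra! hB
  have := card_eq_sum_card_slab E
  rw [Fin.sum_univ_three] at this
  linarith [hB 0, hB 1, hB 2]

lemma slab_nonempty {E : Finset (Word (m + 1))} (h : 2 * 3 ^ m < #E) (u : Fin 3) :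
    (slab u E).Nonempty := by
  rw [← Finset.card_pos]
  have := card_eq_sum_card_slab E
  rw [Fin.sum_univ_three] at this
  have := card_slab_le 0 E; have := card_slab_le 1 E; have := card_slab_le 2 E
  obtain rfl | rfl | rfl : u = 0 ∨ u = 1 ∨ u = 2 := by fin_cases u <;> simp
  all_goals omega

lemma glue_eq_zero {M : Type*} [Zero M] {E : Finset (Word (m + 1))} {f : Fin 3 → Word m → M}
    (hf : ∀ u, ∀ τ ∉ slab u E, f u τ = 0) : ∀ τ ∉ E, glue f τ = 0 := by
  intro τ hτ
  apply hf
  rwa [mem_slab, Fin.cons_self_tail]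

lemma exists_sum_eq_of_nonempty_or {M : Type*} [AddCommMonoid M] {E : Finset (Word m)} {p : M}
    (h : E.Nonempty ∨ p = 0) :
    ∃ y : Word m → M, (∀ τ ∉ E, y τ = 0) ∧ ∑ τ, y τ = p := by
  rcases h with ⟨δ, hδ⟩ | rfl
  · refine ⟨Pi.single δ p, fun τ hτ => Pi.single_eq_of_ne (ne_of_mem_of_not_mem hδ hτ).symm _, ?_⟩
    simp
  · exact ⟨0, fun _ _ => rfl, by simp⟩

lemma glue_update_eq_zero {M : Type*} [Zero M] {E : Finset (Word (m + 1))}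
    {y : Fin 3 → Word m → M} {u : Fin 3} {x : Word m → M}
    (hy : ∀ u, ∀ τ ∉ slab u E, y u τ = 0) (hx : ∀ τ ∉ slab u E, x τ = 0) :
    ∀ τ ∉ E, glue (Function.update y u x) τ = 0 := by
  refine glue_eq_zero fun u' => ?_
  rcases eq_or_ne u' u with rfl | h
  · simpa using hx
  · simpa [h] using hy u'

end Slabs

section Design

variable {M : Type*} [AddCommGroup M] {m : ℕ}

lemma exists_agree_off_sum_eq {ι : Type*} [Fintype ι] [DecidableEq ι] (r : ι → M) (s : ι) (S : M) :
    ∃ r' : ι → M, (∀ t ≠ s, r' t = r t) ∧ ∑ t, r' t = S :=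
  ⟨r + Pi.single s (S - ∑ t, r t), fun t ht => by simp [ht],
    by simp [Finset.sum_add_distrib]⟩

theorem exists_layerSum_eq (E : Finset (Word m)) (hE : 2 * 3 ^ m < 3 * #E)
    (D : Fin m → Fin 3 → M) (S : M) (hD : ∀ ℓ, ∑ t, D ℓ t = S) :
    ∃ x : Word m → M, (∀ τ ∉ E, x τ = 0) ∧ (∀ ℓ t, layerSum ℓ t x = D ℓ t) ∧ ∑ τ, x τ = S := by
  induction m generalizing S with
  | zero =>
    obtain ⟨x, hx, hsum⟩ :=
      exists_sum_eq_of_nonempty_or (E := E) (p := S) (.inl (card_pos.mp (by omega)))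
    exact ⟨x, hx, fun ℓ => ℓ.elim0, hsum⟩
  | succ m ih =>
    have hpow : 3 ^ (m + 1) = 3 * 3 ^ m := by ring
    obtain ⟨us, hus⟩ := exists_lt_three_mul_card_slab (E := E) (B := 2 * 3 ^ m) (by omega)
    choose y hy_supp hy_sum using fun u =>
      exists_sum_eq_of_nonempty_or (p := D 0 u) (.inl (slab_nonempty (E := E) (by omega) u))
    set C : Fin m → Fin 3 → M := fun ℓ t => ∑ u ∈ univ \ {us}, layerSum ℓ t (y u)
    obtain ⟨xr, hxr_supp, hxr, hxr_sum⟩ := ih (slab us E) hus (fun ℓ t => D ℓ.succ t - C ℓ t)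
      (D 0 us) fun ℓ => by
        simp only [C, Finset.sum_sub_distrib, hD, Finset.sum_comm (γ := Fin 3), sum_layerSum,
          hy_sum]
        rw [← hD 0, ← Finset.sum_sdiff (Finset.subset_univ {us})]
        simp
    refine ⟨glue (Function.update y us xr), glue_update_eq_zero hy_supp hxr_supp,
      fun ℓ t => ?_, ?_⟩
    · induction ℓ using Fin.cases with
      | zero => rcases eq_or_ne t us with rfl | h <;> simp [layerSum_zero_glue, *]
      | succ ℓ => simp [layerSum_succ_glue, sum_layerSum_update, hxr, C]
    · rw [sum_word_succ, ← hD 0]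
      refine Finset.sum_congr rfl fun u _ => ?_
      rcases eq_or_ne u us with rfl | h <;> simp [*]

end Design

section Realization

-- If two directions carry letters `s ≠ s'` at some level, the remaining letter receives this
-- offset from exactly one of them; this is what makes the colouring proper.
def offset (s t : Fin 3) : ZMod 2 := if t = s + 1 then 1 else 0

lemma exists_offset_ne {s s' : Fin 3} (h : s ≠ s') :
    ∃ r, r ≠ s ∧ r ≠ s' ∧ offset s r ≠ offset s' r := by
  revert s s'; decide

lemma exists_offset_eq (v : Fin 3) (b : ZMod 2) :
    ∃ u₀ u₁, u₀ ≠ v ∧ u₀ ≠ u₁ ∧ v ≠ u₁ ∧ offset u₀ v = b := by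
  revert v b; decide

lemma fin_three_eq_or_eq {a b c t : Fin 3} (hab : a ≠ b) (hac : a ≠ c) (hbc : b ≠ c)
    (ht : t ≠ a) : t = b ∨ t = c := by
  revert a b c t; decide

lemma sum_fin_three {M : Type*} [AddCommMonoid M] {a b c : Fin 3} (hab : a ≠ b) (hac : a ≠ c)
    (hbc : b ≠ c) (f : Fin 3 → M) : ∑ t, f t = f a + f b + f c := by
  have : (univ : Finset (Fin 3)) = {a, b, c} := by revert a b c; decide
  rw [this, sum_insert (by simp [hab, hac]), sum_insert (by simp [hbc]), sum_singleton, add_assoc]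

variable {m : ℕ}

-- For a colour `g` this says that the edge at `x` in direction `σ` has colour `g`
-- (`colorOf_eq_iff`); the induction needs targets `g` that are not zero-sum.
def Realizes (x : Word m → ZMod 2) (σ : Word m) (g : Fin m → Fin 3 → ZMod 2) : Prop :=
  ∀ ℓ, ∀ t ≠ σ ℓ, layerSum ℓ t x + offset (σ ℓ) t = g ℓ t

lemma realizes_glue_cons_iff {f : Fin 3 → Word m → ZMod 2} {u : Fin 3} {σ : Word m}
    {g : Fin (m + 1) → Fin 3 → ZMod 2} :
    Realizes (glue f) (Fin.cons u σ) g ↔ (∀ t ≠ u, ∑ τ, f t τ + offset u t = g 0 t) ∧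
      ∀ ℓ, ∀ t ≠ σ ℓ, ∑ u', layerSum ℓ t (f u') + offset (σ ℓ) t = g ℓ.succ t := by
  simp [Realizes, Fin.forall_fin_succ, layerSum_zero_glue, layerSum_succ_glue]

theorem exists_realizes_of_large_slab
    (ih : ∀ (F : Finset (Word m)) (g : Fin m → Fin 3 → ZMod 2), 3 ^ m < 3 * #F →
      ∃ σ ∈ F, ∃ x, (∀ τ ∉ F, x τ = 0) ∧ Realizes x σ g)
    {F : Finset (Word (m + 1))} (g : Fin (m + 1) → Fin 3 → ZMod 2) {u₀ : Fin 3}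
    (hbig : 3 ^ m < 3 * #(slab u₀ F))
    (hrest : ∀ t ≠ u₀, (slab t F).Nonempty ∨ g 0 t = offset u₀ t) :
    ∃ σ ∈ F, ∃ x, (∀ τ ∉ F, x τ = 0) ∧ Realizes x σ g := by
  have hfill : ∀ u, (slab u F).Nonempty ∨ g 0 u - offset u₀ u = 0 := by
    intro u
    rcases eq_or_ne u u₀ with rfl | hu
    · exact .inl (card_pos.mp (Nat.pos_of_ne_zero fun h => by simp [h] at hbig))
    · exact (hrest u hu).imp_right sub_eq_zero.mpr
  choose y hy_supp hy_sum using fun u => exists_sum_eq_of_nonempty_or (hfill u)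
  set C : Fin m → Fin 3 → ZMod 2 := fun ℓ t => ∑ u ∈ univ \ {u₀}, layerSum ℓ t (y u)
  obtain ⟨σ, hσ, xr, hxr_supp, hxr⟩ := ih (slab u₀ F) (fun ℓ t => g ℓ.succ t - C ℓ t) hbig
  refine ⟨Fin.cons u₀ σ, mem_slab.mp hσ, glue (Function.update y u₀ xr),
    glue_update_eq_zero hy_supp hxr_supp, realizes_glue_cons_iff.mpr ⟨fun t ht => ?_,
      fun ℓ t ht => ?_⟩⟩
  · simp [ht, hy_sum]
  · rw [sum_layerSum_update]
    linear_combination hxr ℓ t ht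

theorem exists_realizes_of_dense_slab {F : Finset (Word (m + 1))}
    (g : Fin (m + 1) → Fin 3 → ZMod 2) {v u₀ u₁ : Fin 3} (h₀ : u₀ ≠ v) (h₀₁ : u₀ ≠ u₁)
    (h₁ : v ≠ u₁) (hoff : offset u₀ v = g 0 v) (hne : (slab u₀ F).Nonempty)
    (hbig : 2 * 3 ^ m < 3 * #(slab u₁ F)) :
    ∃ σ ∈ F, ∃ x, (∀ τ ∉ F, x τ = 0) ∧ Realizes x σ g := by
  obtain ⟨σ, hσ⟩ := hne
  choose D hD_eq hD_sum using fun ℓ =>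
    exists_agree_off_sum_eq (fun t => g ℓ.succ t - offset (σ ℓ) t) (σ ℓ) (g 0 u₁ - offset u₀ u₁)
  obtain ⟨xr, hxr_supp, hxr, hxr_sum⟩ := exists_layerSum_eq (slab u₁ F) hbig D _ hD_sum
  refine ⟨Fin.cons u₀ σ, mem_slab.mp hσ, glue (Function.update 0 u₁ xr),
    glue_update_eq_zero (by simp) hxr_supp, realizes_glue_cons_iff.mpr ⟨fun t ht => ?_,
      fun ℓ t ht => ?_⟩⟩
  · rcases fin_three_eq_or_eq h₀ h₀₁ h₁ ht with rfl | rfl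
    · simp [h₁, hoff]
    · simp [hxr_sum]
  · simp [sum_layerSum_update, hxr, hD_eq ℓ t ht]

theorem exists_realizes (F : Finset (Word m)) (g : Fin m → Fin 3 → ZMod 2)
    (hF : 3 ^ m < 3 * #F) : ∃ σ ∈ F, ∃ x, (∀ τ ∉ F, x τ = 0) ∧ Realizes x σ g := by
  induction m with
  | zero =>
    obtain ⟨σ, hσ⟩ := card_pos.mp (by omega : 0 < #F)
    exact ⟨σ, hσ, 0, fun _ _ => rfl, fun ℓ => ℓ.elim0⟩
  | succ m ih =>
    have hpow : 3 ^ (m + 1) = 3 * 3 ^ m := by ring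
    by_cases hall : ∀ u, (slab u F).Nonempty
    · obtain ⟨u₀, hu₀⟩ := exists_lt_three_mul_card_slab (E := F) (B := 3 ^ m) (by omega)
      exact exists_realizes_of_large_slab ih g hu₀ fun t _ => .inl (hall t)
    -- An empty slab `v` has parity `0`, so the first letter `u₀` must have the matching offset.
    obtain ⟨v, hv⟩ : ∃ v, slab v F = ∅ := by simpa [not_nonempty_iff_eq_empty] using hall
    obtain ⟨u₀, u₁, h₀, h₀₁, h₁, hoff⟩ := exists_offset_eq v (g 0 v)
    have hcard := card_eq_sum_card_slab F
    rw [sum_fin_three h₀ h₀₁ h₁, hv, card_empty] at hcard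
    have := card_slab_le u₀ F
    by_cases hbig : 3 ^ m < 3 * #(slab u₀ F)
    · refine exists_realizes_of_large_slab ih g hbig fun t ht => ?_
      rcases fin_three_eq_or_eq h₀ h₀₁ h₁ ht with rfl | rfl
      · exact .inr hoff.symm
      · exact .inl (card_pos.mp (by omega))
    · have := card_slab_le u₁ F
      exact exists_realizes_of_dense_slab g h₀ h₀₁ h₁ hoff (card_pos.mp (by omega)) (by omega)

end Realization

section ColorOf

def zeroSumFill {ι G : Type*} [Fintype ι] [DecidableEq ι] [AddCommGroup G] (s : ι) (v : ι → G) :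
    {w : ι → G // ∑ i, w i = 0} :=
  ⟨Function.update v s (-∑ i ∈ univ \ {s}, v i), by simp [Finset.sum_update_of_mem]⟩

lemma zeroSumFill_eq_iff {ι G : Type*} [Fintype ι] [DecidableEq ι] [AddCommGroup G] {s : ι}
    {v : ι → G} {w : {w : ι → G // ∑ i, w i = 0}} :
    zeroSumFill s v = w ↔ ∀ i ≠ s, v i = w.1 i := by
  constructor
  · rintro rfl i hi
    simp [zeroSumFill, hi]
  · intro h
    ext i
    rcases eq_or_ne i s with rfl | hi
    · have hw := w.2
      rw [Finset.sum_eq_add_sum_sdiff_singleton_of_mem (mem_univ i)] at hw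
      rw [← Finset.sum_congr rfl fun j hj => h j (by simpa using hj)] at hw
      simp [zeroSumFill, eq_neg_of_add_eq_zero_left hw]
    · simp [zeroSumFill, hi, h i hi]

abbrev Color (m : ℕ) := Fin m → {w : Fin 3 → ZMod 2 // ∑ t, w t = 0}

lemma card_color (m : ℕ) : Fintype.card (Color m) = 4 ^ m := by
  rw [Fintype.card_fun, Fintype.card_fin]
  rfl

variable {m : ℕ}

def colorOf (x : Word m → ZMod 2) (σ : Word m) : Color m :=
  fun ℓ => zeroSumFill (σ ℓ) fun t => layerSum ℓ t x + offset (σ ℓ) t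

lemma colorOf_eq_iff {x : Word m → ZMod 2} {σ : Word m} {c : Color m} :
    colorOf x σ = c ↔ Realizes x σ fun ℓ t => (c ℓ).1 t := by
  simp [funext_iff, colorOf, zeroSumFill_eq_iff, Realizes]

lemma realizes_colorOf (x : Word m → ZMod 2) (σ : Word m) :
    Realizes x σ fun ℓ t => (colorOf x σ ℓ).1 t :=
  colorOf_eq_iff.mp rfl

lemma colorOf_congr {x y : Word m → ZMod 2} {σ : Word m} (h : ∀ τ ≠ σ, x τ = y τ) :
    colorOf x σ = colorOf y σ := by
  refine (colorOf_eq_iff.mpr fun ℓ t ht => ?_).symm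
  rw [← realizes_colorOf x σ ℓ t ht, layerSum_apply, layerSum_apply]
  refine congrArg (· + _) (Finset.sum_congr rfl fun τ hτ => (h τ ?_).symm)
  rintro rfl
  exact ht (mem_filter.mp hτ).2.symm

lemma colorOf_ne (x : Word m → ZMod 2) {σ σ' : Word m} (h : σ ≠ σ') :
    colorOf x σ ≠ colorOf x σ' := by
  obtain ⟨ℓ, hℓ⟩ := Function.ne_iff.mp h
  obtain ⟨r, hr, hr', hoff⟩ := exists_offset_ne hℓ
  intro heq
  have h' := realizes_colorOf x σ' ℓ r hr'
  rw [← heq] at h'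
  exact hoff (add_left_cancel ((realizes_colorOf x σ ℓ r hr).trans h'.symm))

lemma colorOf_add_eq_iff {x z : Word m → ZMod 2} {σ : Word m} {c c' : Color m}
    (hz : ∀ ℓ, ∀ t ≠ σ ℓ, layerSum ℓ t z = (c' ℓ).1 t - (c ℓ).1 t) :
    colorOf (x + z) σ = c' ↔ colorOf x σ = c := by
  simp only [colorOf_eq_iff, Realizes, map_add]
  refine forall_congr' fun ℓ => forall₂_congr fun t ht => ?_
  rw [hz ℓ t ht]
  constructor <;> intro h <;> linear_combination h

end ColorOf

section Transport

def boolEquivZMod : Bool ≃ ZMod 2 where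
  toFun b := if b then 1 else 0
  invFun z := z = 1
  left_inv b := by cases b <;> rfl
  right_inv z := by fin_cases z <;> rfl

variable {m : ℕ}

def wordEquiv (m : ℕ) : Word m ≃ Fin (3 ^ m) := finFunctionFinEquiv

def vertexEquiv (m : ℕ) : (Fin (3 ^ m) → Bool) ≃ (Word m → ZMod 2) :=
  (wordEquiv m).symm.arrowCongr boolEquivZMod

lemma vertexEquiv_apply (x : Fin (3 ^ m) → Bool) (τ : Word m) :
    vertexEquiv m x τ = boolEquivZMod (x (wordEquiv m τ)) := rfl

lemma vertexEquiv_symm_apply (x : Word m → ZMod 2) (i : Fin (3 ^ m)) :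
    (vertexEquiv m).symm x i = boolEquivZMod.symm (x ((wordEquiv m).symm i)) := rfl

def cubeColor (x : Fin (3 ^ m) → Bool) (i : Fin (3 ^ m)) : Color m :=
  colorOf (vertexEquiv m x) ((wordEquiv m).symm i)

lemma cubeColor_flipAt (x : Fin (3 ^ m) → Bool) (i : Fin (3 ^ m)) :
    cubeColor (flipAt x i) i = cubeColor x i := by
  refine colorOf_congr fun τ hτ => ?_
  rw [vertexEquiv_apply, vertexEquiv_apply, flipAt_of_ne]
  rintro rfl
  simp at hτ

lemma eq_of_cubeColor_eq {x : Fin (3 ^ m) → Bool} {i j : Fin (3 ^ m)}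
    (h : cubeColor x i = cubeColor x j) : i = j := by
  by_contra hij
  exact colorOf_ne _ ((wordEquiv m).symm.injective.ne hij) h

lemma exists_equiv_cubeColor (i : Fin (3 ^ m)) (c c' : Color m) :
    ∃ T : (Fin (3 ^ m) → Bool) ≃ (Fin (3 ^ m) → Bool),
      ∀ x, T x i = x i ∧ (cubeColor (T x) i = c' ↔ cubeColor x i = c) := by
  obtain ⟨z, hzσ, hz⟩ :=
    exists_vanishing_at_layerSum_eq ((wordEquiv m).symm i) fun ℓ t => (c' ℓ).1 t - (c ℓ).1 t
  refine ⟨((vertexEquiv m).trans (Equiv.addRight z)).trans (vertexEquiv m).symm, fun x => ⟨?_, ?_⟩⟩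
  · simp [vertexEquiv_symm_apply, vertexEquiv_apply, hzσ]
  · simpa [cubeColor] using colorOf_add_eq_iff hz

theorem blocks_colorClass (d : ℕ) (c : Color (d + 1)) :
    Blocks (3 ^ (d + 1)) (3 ^ d + 1) (colorClass cubeColor c) := by
  rintro _ ⟨P, b, hP, rfl⟩
  set F := Pᶜ.map (wordEquiv (d + 1)).symm.toEmbedding
  have hF : 3 ^ (d + 1) < 3 * #F := by
    have : 1 ≤ 3 ^ d := Nat.one_le_pow _ _ (by norm_num)
    rw [card_map, card_compl, Fintype.card_fin, hP, pow_succ]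
    omega
  -- Shifting the target by the layer sums of `b` lets the solution be supported on `F`.
  set p := vertexEquiv (d + 1) b
  obtain ⟨σ, hσ, z, hz_supp, hz⟩ := exists_realizes F (fun ℓ t => (c ℓ).1 t - layerSum ℓ t p) hF
  set x := (vertexEquiv (d + 1)).symm (p + z)
  refine ⟨{x, flipAt x (wordEquiv _ σ)}, ⟨x, _, rfl, ?_⟩, pair_flipAt_subset (fun j hj => ?_) ?_⟩
  · rw [cubeColor, Equiv.symm_apply_apply, Equiv.apply_symm_apply, colorOf_eq_iff]
    intro ℓ t ht
    rw [map_add]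
    linear_combination hz ℓ t ht
  · have : (wordEquiv (d + 1)).symm j ∉ F := by simpa [F] using hj
    simp [x, vertexEquiv_symm_apply, hz_supp _ this, p, vertexEquiv_apply]
  · simpa [F] using hσ

end Transport

end SubcubeMatching

open SubcubeMatching

theorem stmt_14 (d : ℕ) :
    ∃ M : Fin (4 ^ (d + 1)) → Set (Set (Fin (3 ^ (d + 1)) → Bool)),
      (∀ j, IsMatching (3 ^ (d + 1)) (M j)) ∧
      (∀ j, Blocks (3 ^ (d + 1)) (3 ^ d + 1) (M j)) ∧
      (∀ j j', j ≠ j' → M j ∩ M j' = ∅) ∧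
      (⋃ j, M j) = {e | QEdge (3 ^ (d + 1)) e} ∧
      (∀ j j', (M j).ncard = (M j').ncard) := by
  let e : Color (d + 1) ≃ Fin (4 ^ (d + 1)) := Fintype.equivFinOfCardEq (card_color _)
  refine ⟨fun j => colorClass cubeColor (e.symm j),
    fun j => isMatching_colorClass cubeColor_flipAt (fun _ _ _ => eq_of_cubeColor_eq) _,
    fun j => blocks_colorClass d _,
    fun j j' h => colorClass_disjoint cubeColor_flipAt (e.symm.injective.ne h), ?_,
    fun j j' => ncard_colorClass_eq cubeColor_flipAt exists_equiv_cubeColor _ _⟩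
  exact (e.symm.surjective.iUnion_comp _).trans iUnion_colorClass
end

section
/- There exists a matching of Q_6 of 24 edges, namely the union of the four 'cyclic orbits' ⟨(v,0,1,0,0,0)⟩, ⟨(v,1,0,1,1,1)⟩, ⟨(v,0,1,1,0,0)⟩, ⟨(v,1,0,0,1,1)⟩ (where ⟨e⟩ denotes the set of 6 cyclic coordinate-shifts of the edge e), such that every 3-dimensional subcube of Q_6 contains an edge of this matching. -/
def cyc (e : Set (Fin 6 → Bool)) : Set (Set (Fin 6 → Bool)) :=
  {f | ∃ j : Fin 6, f = (fun x : Fin 6 → Bool => fun i => x (i + j)) '' e}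

def M6 : Set (Set (Fin 6 → Bool)) :=
  cyc {![false,false,true,false,false,false], ![true,false,true,false,false,false]} ∪
  cyc {![false,true,false,true,true,true], ![true,true,false,true,true,true]} ∪
  cyc {![false,false,true,true,false,false], ![true,false,true,true,false,false]} ∪
  cyc {![false,true,false,false,true,true], ![true,true,false,false,true,true]}

/-!
The 24 edges are the pairs `{m6Vertex (p, false), m6Vertex (p, true)}`, where `p = (j, k)` picks
the `j`-th cyclic shift of the `k`-th orbit. The 48 endpoints are pairwise distinct, which gives
both the matching property and the count. An edge lies in the subcube fixing the coordinates in
`F` to `b` iff both endpoints agree with `b` on `F`; since only `b` on `F` matters, this is a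
finite check over `20 · 8` subcubes.
-/

open Function

section PairSet

variable {α ι : Type*}

def pairSet (f : ι × Bool → α) (p : ι) : Set α := {f (p, false), f (p, true)}

variable {f : ι × Bool → α}

theorem disjoint_pairSet (hf : Injective f) {p q : ι} (hpq : p ≠ q) :
    Disjoint (pairSet f p) (pairSet f q) := by
  simp only [pairSet, Set.disjoint_insert_right, Set.disjoint_singleton_right, Set.mem_insert_iff,
    Set.mem_singleton_iff, hf.eq_iff, Prod.mk.injEq]
  tauto

theorem pairSet_injective (hf : Injective f) : Injective (pairSet f) := by
  intro p q hpq
  by_contra hne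
  have hmem : f (p, false) ∈ pairSet f q := hpq ▸ Set.mem_insert _ _
  exact Set.disjoint_left.mp (disjoint_pairSet hf hne) (Set.mem_insert _ _) hmem

theorem ncard_range_pairSet [Finite ι] (hf : Injective f) :
    (Set.range (pairSet f)).ncard = Nat.card ι := by
  rw [← Set.image_univ, (pairSet_injective hf).injOn.ncard_image, Set.ncard_univ]

end PairSet

section Hypercube

variable {n : ℕ} {ι : Type*} {f : ι × Bool → Fin n → Bool}

theorem isMatching_range_pairSet (hf : Injective f)
    (hadj : ∀ p, QAdj (f (p, false)) (f (p, true))) : IsMatching n (Set.range (pairSet f)) := by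
  refine ⟨?_, ?_⟩
  · rintro _ ⟨p, rfl⟩
    exact ⟨_, _, hadj p, rfl⟩
  · rintro _ ⟨p, rfl⟩ _ ⟨q, rfl⟩ hne
    exact (disjoint_pairSet hf fun h => hne (congrArg _ h)).eq_bot

theorem blocks_range_pairSet {k : ℕ}
    (h : ∀ F : Finset (Fin n), F.card = n - k → ∀ b : Fin n → Bool, (∀ i ∉ F, b i = false) →
      ∃ p, ∀ c, ∀ i ∈ F, f (p, c) i = b i) :
    Blocks n k (Set.range (pairSet f)) := by
  rintro S ⟨F, b, hF, rfl⟩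
  obtain ⟨p, hp⟩ := h F hF (fun i => if i ∈ F then b i else false) fun i hi => if_neg hi
  refine ⟨pairSet f p, ⟨p, rfl⟩, ?_⟩
  rintro x (rfl | rfl) i hi
  all_goals simpa only [if_pos hi] using hp _ i hi

end Hypercube

def shift {n : ℕ} (j : Fin n) (x : Fin n → Bool) : Fin n → Bool := fun i => x (i + j)

/-- Coordinate `0` plays the role of the paper's `v`; its value here is irrelevant, since
`m6Vertex` overwrites it. -/
def m6Seed : Fin 4 → Fin 6 → Bool :=
  ![![false,false,true,false,false,false], ![false,true,false,true,true,true],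
    ![false,false,true,true,false,false], ![false,true,false,false,true,true]]

def m6Vertex (v : (Fin 6 × Fin 4) × Bool) : Fin 6 → Bool :=
  shift v.1.1 (update (m6Seed v.1.2) 0 v.2)

theorem cyc_pair_eq_range_m6Vertex {k : Fin 4} {x y : Fin 6 → Bool}
    (hx : update (m6Seed k) 0 false = x) (hy : update (m6Seed k) 0 true = y) :
    cyc {x, y} = Set.range fun j => pairSet m6Vertex (j, k) := by
  subst hx hy
  ext e
  simp only [cyc, Set.image_insert_eq, Set.image_singleton, Set.mem_ofPred_eq, Set.mem_range,
    eq_comm]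
  rfl

theorem M6_eq_range : M6 = Set.range (pairSet m6Vertex) := by
  rw [M6, cyc_pair_eq_range_m6Vertex (k := 0) (by decide) (by decide),
    cyc_pair_eq_range_m6Vertex (k := 1) (by decide) (by decide),
    cyc_pair_eq_range_m6Vertex (k := 2) (by decide) (by decide),
    cyc_pair_eq_range_m6Vertex (k := 3) (by decide) (by decide)]
  ext e
  simp only [Set.mem_union, Set.mem_range, Prod.exists]
  constructor
  · rintro (((⟨j, rfl⟩ | ⟨j, rfl⟩) | ⟨j, rfl⟩) | ⟨j, rfl⟩) <;> exact ⟨j, _, rfl⟩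
  · rintro ⟨j, k, rfl⟩
    fin_cases k <;> simp

theorem m6Vertex_injective : Injective m6Vertex := by decide +kernel

theorem qAdj_m6Vertex (p : Fin 6 × Fin 4) : QAdj (m6Vertex (p, false)) (m6Vertex (p, true)) := by
  revert p; unfold QAdj; decide +kernel

theorem exists_m6Vertex_agree (F : Finset (Fin 6)) (hF : F.card = 3) (b : Fin 6 → Bool)
    (hb : ∀ i ∉ F, b i = false) : ∃ p, ∀ c, ∀ i ∈ F, m6Vertex (p, c) i = b i := by
  revert F b; decide +kernel

theorem stmt_19 :
    IsMatching 6 M6 ∧ M6.ncard = 24 ∧ Blocks 6 3 M6 := by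
  rw [M6_eq_range]
  refine ⟨isMatching_range_pairSet m6Vertex_injective qAdj_m6Vertex, ?_,
    blocks_range_pairSet exists_m6Vertex_agree⟩
  rw [ncard_range_pairSet m6Vertex_injective]
  simp
end
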